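/- arXiv:2511.15161 — 6 statements merged into one kernel-verified Lean document; each statement's English description precedes it below -/
import Mathlib

section
/- Let X ∈ ℝ^{n×p} and y ∈ ℝⁿ, and suppose 1_n does not lie in the column space of X. Set M_X := I_n − X X⁺. Then 1_nᵀ M_X 1_n > 0 and the minimum-norm OLS estimator (μ̂, β̂) = OLS(X,y) satisfies μ̂ = (1_nᵀ M_X y)/(1_nᵀ M_X 1_n) and β̂ = X⁺(y − μ̂ 1_n). -/
open Finset Matrix

/-- The least-squares objective for OLS with an unpenalized intercept. -/
noncomputable def olsObj {n p : ℕ} (X : Matrix (Fin n) (Fin p) ℝ) (y : Fin n → ℝ)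
    (q : ℝ × (Fin p → ℝ)) : ℝ :=
  ∑ i, (y i - X.mulVec q.2 i - q.1) ^ 2

/-- The set `S_{X,y}` of least-squares minimizers. -/
noncomputable def olsSet {n p : ℕ} (X : Matrix (Fin n) (Fin p) ℝ) (y : Fin n → ℝ) :
    Set (ℝ × (Fin p → ℝ)) :=
  {q | ∀ q', olsObj X y q ≤ olsObj X y q'}

/-- `Ap` is the Moore–Penrose pseudoinverse of `A`. -/
def IsMoorePenrose {m n : ℕ} (A : Matrix (Fin m) (Fin n) ℝ)
    (Ap : Matrix (Fin n) (Fin m) ℝ) : Prop :=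
  A * Ap * A = A ∧ Ap * A * Ap = Ap ∧ (A * Ap)ᵀ = A * Ap ∧ (Ap * A)ᵀ = Ap * A

namespace Stmt1Aux

lemma dot_mulVec_left {m n : ℕ} (A : Matrix (Fin m) (Fin n) ℝ) (v : Fin n → ℝ) (u : Fin m → ℝ) :
    (A.mulVec v) ⬝ᵥ u = v ⬝ᵥ (Aᵀ.mulVec u) := by
  rw [dotProduct_comm, dotProduct_mulVec, ← mulVec_transpose, dotProduct_comm]

lemma sumsq_eq_dot {n : ℕ} (v : Fin n → ℝ) : ∑ j, v j ^ 2 = v ⬝ᵥ v := by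
  simp [dotProduct, sq]

lemma dot_self_nonneg {n : ℕ} (v : Fin n → ℝ) : 0 ≤ v ⬝ᵥ v :=
  Finset.sum_nonneg fun _ _ => mul_self_nonneg _

lemma olsObj_eq_dot {n p : ℕ} (X : Matrix (Fin n) (Fin p) ℝ) (y : Fin n → ℝ)
    (q : ℝ × (Fin p → ℝ)) :
    olsObj X y q = (y - X.mulVec q.2 - q.1 • (fun _ => (1:ℝ))) ⬝ᵥ
      (y - X.mulVec q.2 - q.1 • (fun _ => (1:ℝ))) := by
  unfold olsObj dotProduct
  refine Finset.sum_congr rfl fun i _ => ?_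
  simp [sq]

end Stmt1Aux

open Stmt1Aux in
/-- if `1ₙ ∉ col(X)` and `M_X = Iₙ − X X⁺`, then `1ₙᵀ M_X 1ₙ > 0`, the
minimum-norm OLS estimator exists, and it satisfies
`μ̂ = (1ₙᵀ M_X y)/(1ₙᵀ M_X 1ₙ)` and `β̂ = X⁺(y − μ̂ 1ₙ)`. -/
theorem stmt1 {n p : ℕ} (X : Matrix (Fin n) (Fin p) ℝ) (y : Fin n → ℝ)
    (Xp : Matrix (Fin p) (Fin n) ℝ) (hXp : IsMoorePenrose X Xp)
    (hcol : ¬ ∃ β : Fin p → ℝ, X.mulVec β = fun _ => (1 : ℝ)) :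
    (0 : ℝ) < (fun _ => (1 : ℝ)) ⬝ᵥ ((1 - X * Xp).mulVec fun _ => (1 : ℝ)) ∧
    (∃ q : ℝ × (Fin p → ℝ), q ∈ olsSet X y ∧
        ∀ q' ∈ olsSet X y, ∑ j, q.2 j ^ 2 ≤ ∑ j, q'.2 j ^ 2) ∧
    ∀ (μhat : ℝ) (βhat : Fin p → ℝ),
      (μhat, βhat) ∈ olsSet X y →
      (∀ q' ∈ olsSet X y, ∑ j, βhat j ^ 2 ≤ ∑ j, q'.2 j ^ 2) →
      μhat = ((fun _ => (1 : ℝ)) ⬝ᵥ ((1 - X * Xp).mulVec y)) /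
             ((fun _ => (1 : ℝ)) ⬝ᵥ ((1 - X * Xp).mulVec fun _ => (1 : ℝ))) ∧
      βhat = Xp.mulVec (y - μhat • fun _ => (1 : ℝ)) := by
  obtain ⟨h1, h2, h3, h4⟩ := hXp
  set ones : Fin n → ℝ := fun _ => (1 : ℝ) with hones
  set M : Matrix (Fin n) (Fin n) ℝ := 1 - X * Xp with hM
  -- basic matrix identities
  have hMsym : Mᵀ = M := by rw [hM, transpose_sub, transpose_one, h3]
  have hMX : M * X = 0 := by rw [hM, Matrix.sub_mul, Matrix.one_mul, h1, sub_self]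
  have hPP : (X * Xp) * (X * Xp) = X * Xp := by rw [← Matrix.mul_assoc, h1]
  have hMidem : M * M = M := by
    rw [hM, sub_mul, one_mul, mul_sub, mul_one, hPP, sub_self, sub_zero]
  have hXtM : Xᵀ * M = 0 := by
    rw [← hMsym, ← transpose_mul, hMX, transpose_zero]
  -- r ⟂ col(X) for r in range of M
  have horthX : ∀ (w : Fin n → ℝ) (β : Fin p → ℝ), (M.mulVec w) ⬝ᵥ (X.mulVec β) = 0 := by
    intro w β
    rw [dotProduct_comm, dot_mulVec_left, mulVec_mulVec, hXtM, zero_mulVec, dotProduct_zero]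
  set den : ℝ := ones ⬝ᵥ (M.mulVec ones) with hden
  set num : ℝ := ones ⬝ᵥ (M.mulVec y) with hnum
  have hdenself : den = (M.mulVec ones) ⬝ᵥ (M.mulVec ones) := by
    rw [dot_mulVec_left, mulVec_mulVec, hMsym, hMidem, hden]
  have hdenpos : 0 < den := by
    rcases lt_or_eq_of_le (dot_self_nonneg (M.mulVec ones)) with h | h
    · rwa [hdenself]
    · exfalso
      have hz : M.mulVec ones = 0 := dotProduct_self_eq_zero.mp h.symm
      have : X.mulVec (Xp.mulVec ones) = ones := by
        have := hz
        rw [hM, sub_mulVec, one_mulVec, sub_eq_zero] at this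
        rw [mulVec_mulVec, ← this]
      exact hcol ⟨Xp.mulVec ones, this⟩
  set μh : ℝ := num / den with hμh
  set w : Fin n → ℝ := y - μh • ones with hw
  set βh : Fin p → ℝ := Xp.mulVec w with hβh
  set r0 : Fin n → ℝ := M.mulVec w with hr0
  have hones_r0 : ones ⬝ᵥ r0 = 0 := by
    rw [hr0, hw, mulVec_sub, mulVec_smul, dotProduct_sub, dotProduct_smul, ← hnum, ← hden,
      hμh, smul_eq_mul, div_mul_cancel₀ _ hdenpos.ne', sub_self]
  have hresid : y - X.mulVec βh - μh • ones = r0 := by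
    rw [hr0, hβh, mulVec_mulVec, hM, sub_mulVec, one_mulVec, hw]
    abel
  -- decomposition of the objective
  have hobj : ∀ μ (β : Fin p → ℝ),
      olsObj X y (μ, β) = r0 ⬝ᵥ r0 +
        ((X.mulVec β + μ • ones) - (X.mulVec βh + μh • ones)) ⬝ᵥ
        ((X.mulVec β + μ • ones) - (X.mulVec βh + μh • ones)) := by
    intro μ β
    obtain ⟨d, hd⟩ : ∃ d : Fin n → ℝ,
        d = (X.mulVec β + μ • ones) - (X.mulVec βh + μh • ones) := ⟨_, rfl⟩
    have hr0d : r0 ⬝ᵥ d = 0 := by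
      have hd' : d = X.mulVec (β - βh) + (μ - μh) • ones := by
        rw [hd, mulVec_sub, sub_smul]; abel
      rw [hd', dotProduct_add, horthX, dotProduct_smul, dotProduct_comm, hones_r0,
        smul_zero, add_zero]
    have hres : y - X.mulVec β - μ • ones = r0 - d := by
      rw [hd, ← hresid]; abel
    rw [← hd, olsObj_eq_dot]
    show (y - X.mulVec β - μ • ones) ⬝ᵥ (y - X.mulVec β - μ • ones) = _
    rw [hres, sub_dotProduct, dotProduct_sub, dotProduct_sub, hr0d,
      dotProduct_comm d r0, hr0d]
    ring
  have hq0obj : olsObj X y (μh, βh) = r0 ⬝ᵥ r0 := by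
    rw [hobj, sub_self, dotProduct_zero, add_zero]
  have hq0mem : (μh, βh) ∈ olsSet X y := by
    intro q'
    rw [hq0obj, hobj q'.1 q'.2]
    exact le_add_of_nonneg_right (dot_self_nonneg _)
  -- characterization of minimizers
  have hchar : ∀ μ (β : Fin p → ℝ), (μ, β) ∈ olsSet X y →
      μ = μh ∧ X.mulVec β = X.mulVec βh := by
    intro μ β hmem
    have hle := hmem (μh, βh)
    rw [hq0obj, hobj] at hle
    have hd0 : (X.mulVec β + μ • ones) - (X.mulVec βh + μh • ones) = 0 := by
      have hnn := dot_self_nonneg ((X.mulVec β + μ • ones) - (X.mulVec βh + μh • ones))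
      have : ((X.mulVec β + μ • ones) - (X.mulVec βh + μh • ones)) ⬝ᵥ
          ((X.mulVec β + μ • ones) - (X.mulVec βh + μh • ones)) = 0 := le_antisymm (by linarith) hnn
      exact dotProduct_self_eq_zero.mp this
    have heq : X.mulVec β + μ • ones = X.mulVec βh + μh • ones := sub_eq_zero.mp hd0
    have hμ : μ = μh := by
      by_contra hne
      apply hcol
      refine ⟨(μh - μ)⁻¹ • (β - βh), ?_⟩
      have hXd' : X.mulVec β - X.mulVec βh = μh • ones - μ • ones := by
        rw [sub_eq_sub_iff_add_eq_add, heq, add_comm]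
      have hXd : X.mulVec (β - βh) = (μh - μ) • ones := by
        rw [mulVec_sub, sub_smul, hXd']
      rw [mulVec_smul, hXd, smul_smul, inv_mul_cancel₀ (sub_ne_zero.mpr (Ne.symm hne)), one_smul]
    refine ⟨hμ, ?_⟩
    have := heq
    rw [hμ] at this
    exact add_right_cancel this
  -- minimum-norm property
  have hQ : ∀ β : Fin p → ℝ, X.mulVec β = X.mulVec βh → (Xp * X).mulVec β = βh := by
    intro β hXβ
    rw [← mulVec_mulVec, hXβ, hβh, mulVec_mulVec, mulVec_mulVec, h2]
  have hnormdec : ∀ β : Fin p → ℝ, X.mulVec β = X.mulVec βh →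
      β ⬝ᵥ β = βh ⬝ᵥ βh + (β - βh) ⬝ᵥ (β - βh) := by
    intro β hXβ
    have hQβ : (Xp * X).mulVec β = βh := hQ β hXβ
    have hQβh : (Xp * X).mulVec βh = βh := hQ βh rfl
    obtain ⟨e, he⟩ : ∃ e : Fin p → ℝ, e = β - βh := ⟨_, rfl⟩
    have hQe : (Xp * X).mulVec e = 0 := by
      rw [he, mulVec_sub, hQβ, hQβh, sub_self]
    have hcross : βh ⬝ᵥ e = 0 := by
      rw [← hQβ, dot_mulVec_left, h4, hQe, dotProduct_zero]
    have hβe : β = βh + e := by rw [he]; abel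
    rw [← he]
    calc β ⬝ᵥ β = (βh + e) ⬝ᵥ (βh + e) := by rw [← hβe]
      _ = βh ⬝ᵥ βh + e ⬝ᵥ e := by
          rw [add_dotProduct, dotProduct_add, dotProduct_add, hcross,
            dotProduct_comm e βh, hcross]
          ring
  refine ⟨hdenpos, ⟨(μh, βh), hq0mem, ?_⟩, ?_⟩
  · intro q' hq'
    obtain ⟨_, hXβ⟩ := hchar q'.1 q'.2 (by rwa [Prod.mk.eta])
    rw [sumsq_eq_dot, sumsq_eq_dot, hnormdec q'.2 hXβ]
    exact le_add_of_nonneg_right (dot_self_nonneg _)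
  · intro μhat βhat hmem hmin
    obtain ⟨hμ, hXβ⟩ := hchar μhat βhat hmem
    have hβ : βhat = βh := by
      have h1' := hmin (μh, βh) hq0mem
      rw [sumsq_eq_dot, sumsq_eq_dot, hnormdec βhat hXβ] at h1'
      have hnn := dot_self_nonneg (βhat - βh)
      have : (βhat - βh) ⬝ᵥ (βhat - βh) = 0 := le_antisymm (by linarith) hnn
      exact sub_eq_zero.mp (dotProduct_self_eq_zero.mp this)
    exact ⟨hμ, by rw [hβ, hβh, hw, hμ]⟩
end

section
/- Let X ∈ ℝ^{n×p} and y ∈ ℝⁿ, and suppose 1_n lies in the column space of X. Set K_X := (X Xᵀ)⁺. Then 1_nᵀ K_X 1_n > 0 and the minimum-norm OLS estimator (μ̂, β̂) = OLS(X,y) satisfies μ̂ = (1_nᵀ K_X y)/(1_nᵀ K_X 1_n) and β̂ = X⁺(y − μ̂ 1_n). -/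
/-!
Put `u = X⁺ 1`. Since `1` lies in the column space of `X`, the least-squares fits are exactly
the pairs `(μ, β)` with `X β + μ 1 = X X⁺ y`. For a fixed intercept `μ` the slope
`X⁺ (y - μ 1) = X⁺ y - μ u` is one of them, and every other admissible slope differs from it by
a vector of `ker X`, which is orthogonal to the range of `X⁺`; so it has the least norm. The
quadratic `‖X⁺ y - μ u‖²` is minimized exactly at `μ = ⟪u, X⁺ y⟫ / ‖u‖²`, where `‖u‖² > 0`
because `X u = 1`. Finally `(X Xᵀ)⁺ = (X⁺)ᵀ X⁺`, so `1ᵀ K_X v = ⟪u, X⁺ v⟫`.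
-/
open Finset Matrix

section DotProduct

variable {ι R : Type*} [Fintype ι]

theorem dotProduct_self_eq_sum_sq [CommSemiring R] (v : ι → R) : v ⬝ᵥ v = ∑ i, v i ^ 2 := by
  simp only [dotProduct, sq]

theorem dotProduct_self_nonneg [CommRing R] [LinearOrder R] [IsStrictOrderedRing R] (v : ι → R) :
    0 ≤ v ⬝ᵥ v :=
  Finset.sum_nonneg fun i _ => mul_self_nonneg (v i)

theorem dotProduct_self_add_of_dotProduct_eq_zero [CommRing R] {a b : ι → R} (h : a ⬝ᵥ b = 0) :
    (a + b) ⬝ᵥ (a + b) = a ⬝ᵥ a + b ⬝ᵥ b := by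
  rw [add_dotProduct, dotProduct_add, dotProduct_add, h, dotProduct_comm b a, h]
  ring

theorem dotProduct_sub_smul_self [Field R] {u : ι → R} (hu : u ⬝ᵥ u ≠ 0) (w : ι → R) (μ : R) :
    (w - μ • u) ⬝ᵥ (w - μ • u) =
      (w - (u ⬝ᵥ w / u ⬝ᵥ u) • u) ⬝ᵥ (w - (u ⬝ᵥ w / u ⬝ᵥ u) • u) +
        u ⬝ᵥ u * (μ - u ⬝ᵥ w / u ⬝ᵥ u) ^ 2 := by
  set c := u ⬝ᵥ w / u ⬝ᵥ u with hc
  have horth : (w - c • u) ⬝ᵥ ((c - μ) • u) = 0 := by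
    rw [dotProduct_smul, sub_dotProduct, smul_dotProduct, dotProduct_comm w u, hc, smul_eq_mul,
      smul_eq_mul, div_mul_cancel₀ _ hu, sub_self, mul_zero]
  rw [show w - μ • u = (w - c • u) + (c - μ) • u by rw [sub_smul]; abel,
    dotProduct_self_add_of_dotProduct_eq_zero horth, smul_dotProduct, dotProduct_smul,
    smul_eq_mul, smul_eq_mul]
  ring

theorem dotProduct_mulVec_transpose_mul_self [CommSemiring R] {κ : Type*} [Fintype κ]
    (P : Matrix κ ι R) (v w : ι → R) : v ⬝ᵥ (Pᵀ * P) *ᵥ w = (P *ᵥ v) ⬝ᵥ (P *ᵥ w) := by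
  rw [← mulVec_mulVec, dotProduct_mulVec, vecMul_transpose]

end DotProduct

namespace IsMoorePenrose

variable {m k : ℕ} {A : Matrix (Fin m) (Fin k) ℝ} {P Q : Matrix (Fin k) (Fin m) ℝ}

theorem symm (h : IsMoorePenrose A P) : IsMoorePenrose P A :=
  ⟨h.2.1, h.1, h.2.2.2, h.2.2.1⟩

theorem transpose_mul_transpose (h : IsMoorePenrose A P) : Pᵀ * Aᵀ = A * P := by
  rw [← transpose_mul, h.2.2.1]

theorem mul_mul_transpose_self (h : IsMoorePenrose A P) : P * (A * Aᵀ) = Aᵀ := by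
  rw [← Matrix.mul_assoc, ← h.symm.transpose_mul_transpose, Matrix.mul_assoc, ← transpose_mul,
    ← transpose_mul, h.1]

theorem transpose_mul_mul_self (h : IsMoorePenrose A P) : Aᵀ * (A * P) = Aᵀ := by
  rw [← h.transpose_mul_transpose, ← Matrix.mul_assoc, ← transpose_mul, ← transpose_mul,
    ← Matrix.mul_assoc, h.1]

theorem unique (hP : IsMoorePenrose A P) (hQ : IsMoorePenrose A Q) : P = Q := by
  have hAP : A * P = A * Q := calc
    A * P = Pᵀ * (A * Q * A)ᵀ := by rw [hQ.1, hP.transpose_mul_transpose]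
    _ = (Pᵀ * Aᵀ) * (Qᵀ * Aᵀ) := by simp only [transpose_mul, Matrix.mul_assoc]
    _ = A * Q := by
      rw [hP.transpose_mul_transpose, hQ.transpose_mul_transpose, ← Matrix.mul_assoc, hP.1]
  have hPA : P * A = Q * A := calc
    P * A = (A * Q * A)ᵀ * Pᵀ := by rw [hQ.1, hP.symm.transpose_mul_transpose]
    _ = (Aᵀ * Qᵀ) * (Aᵀ * Pᵀ) := by simp only [transpose_mul, Matrix.mul_assoc]
    _ = Q * A := by
      rw [hP.symm.transpose_mul_transpose, hQ.symm.transpose_mul_transpose, Matrix.mul_assoc,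
        ← Matrix.mul_assoc A, hP.1]
  calc P = P * A * P := hP.2.1.symm
    _ = Q * A * Q := by rw [hPA, Matrix.mul_assoc, hAP, ← Matrix.mul_assoc]
    _ = Q := hQ.2.1

theorem mul_transpose_self (h : IsMoorePenrose A P) : IsMoorePenrose (A * Aᵀ) (Pᵀ * P) := by
  have hA : ∀ {ι : Type} [Fintype ι] (Z : Matrix (Fin k) ι ℝ), A * (P * (A * Z)) = A * Z := by
    intro ι _ Z; rw [← Matrix.mul_assoc, ← Matrix.mul_assoc, h.1]
  have hP : P * (A * P) = P := by rw [← Matrix.mul_assoc, h.2.1]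
  have hAt : ∀ {ι : Type} [Fintype ι] (Z : Matrix (Fin k) ι ℝ), Aᵀ * (Pᵀ * Z) = P * (A * Z) := by
    intro ι _ Z; rw [← Matrix.mul_assoc, ← Matrix.mul_assoc, h.symm.transpose_mul_transpose]
  refine ⟨?_, ?_, ?_, ?_⟩
  · simp only [Matrix.mul_assoc, hAt, hA]
  · simp only [Matrix.mul_assoc, hAt, hP]
  · simp only [Matrix.mul_assoc, hAt, hA, h.2.2.1]
  · simp only [Matrix.mul_assoc, h.mul_mul_transpose_self, h.transpose_mul_transpose, h.2.2.1]

theorem mulVec_mulVec_of_mulVec_eq (h : IsMoorePenrose A P) {b : Fin k → ℝ} {v : Fin m → ℝ}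
    (hb : A *ᵥ b = v) : A *ᵥ (P *ᵥ v) = v := by
  rw [← hb, mulVec_mulVec, mulVec_mulVec, h.1]

theorem sub_mulVec_mulVec_dotProduct_mulVec (h : IsMoorePenrose A P) (y : Fin m → ℝ)
    (v : Fin k → ℝ) : (y - A *ᵥ (P *ᵥ y)) ⬝ᵥ A *ᵥ v = 0 := by
  rw [dotProduct_mulVec, ← mulVec_transpose, mulVec_sub, mulVec_mulVec, mulVec_mulVec,
    Matrix.mul_assoc, h.transpose_mul_mul_self, sub_self, zero_dotProduct]

theorem mulVec_dotProduct_of_mulVec_eq_zero (h : IsMoorePenrose A P) (z : Fin m → ℝ)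
    {d : Fin k → ℝ} (hd : A *ᵥ d = 0) : (P *ᵥ z) ⬝ᵥ d = 0 := by
  rw [← vecMul_transpose, ← dotProduct_mulVec, ← h.symm.transpose_mul_mul_self, ← mulVec_mulVec,
    ← mulVec_mulVec, hd, mulVec_zero, mulVec_zero, dotProduct_zero]

end IsMoorePenrose

section OLS

variable {n p : ℕ} {X : Matrix (Fin n) (Fin p) ℝ} {Xp : Matrix (Fin p) (Fin n) ℝ}
  {y : Fin n → ℝ} {β₀ : Fin p → ℝ}

def pinvSlope (Xp : Matrix (Fin p) (Fin n) ℝ) (y : Fin n → ℝ) (μ : ℝ) : Fin p → ℝ :=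
  Xp *ᵥ (y - μ • 1)

noncomputable def pinvIntercept (Xp : Matrix (Fin p) (Fin n) ℝ) (y : Fin n → ℝ) : ℝ :=
  (Xp *ᵥ 1) ⬝ᵥ (Xp *ᵥ y) / (Xp *ᵥ 1) ⬝ᵥ (Xp *ᵥ 1)

theorem pinvSlope_eq_sub_smul (Xp : Matrix (Fin p) (Fin n) ℝ) (y : Fin n → ℝ) (μ : ℝ) :
    pinvSlope Xp y μ = Xp *ᵥ y - μ • Xp *ᵥ 1 := by
  rw [pinvSlope, mulVec_sub, mulVec_smul]

theorem olsObj_eq_dotProduct (X : Matrix (Fin n) (Fin p) ℝ) (y : Fin n → ℝ)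
    (q : ℝ × (Fin p → ℝ)) :
    olsObj X y q = (y - X *ᵥ q.2 - q.1 • 1) ⬝ᵥ (y - X *ᵥ q.2 - q.1 • 1) := by
  simp [olsObj, dotProduct_self_eq_sum_sq]

namespace IsMoorePenrose

theorem olsObj_eq (hXp : IsMoorePenrose X Xp) (hβ₀ : X *ᵥ β₀ = 1) (q : ℝ × (Fin p → ℝ)) :
    olsObj X y q = (y - X *ᵥ (Xp *ᵥ y)) ⬝ᵥ (y - X *ᵥ (Xp *ᵥ y)) +
      (X *ᵥ (Xp *ᵥ y) - (X *ᵥ q.2 + q.1 • 1)) ⬝ᵥ (X *ᵥ (Xp *ᵥ y) - (X *ᵥ q.2 + q.1 • 1)) := by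
  have hd : X *ᵥ (Xp *ᵥ y - (q.2 + q.1 • β₀)) = X *ᵥ (Xp *ᵥ y) - (X *ᵥ q.2 + q.1 • 1) := by
    rw [mulVec_sub, mulVec_add, mulVec_smul, hβ₀]
  rw [← hd, ← dotProduct_self_add_of_dotProduct_eq_zero
    (hXp.sub_mulVec_mulVec_dotProduct_mulVec y _), hd, olsObj_eq_dotProduct]
  congr 1 <;> abel

theorem mem_olsSet_iff (hXp : IsMoorePenrose X Xp) (hβ₀ : X *ᵥ β₀ = 1) (q : ℝ × (Fin p → ℝ)) :
    q ∈ olsSet X y ↔ X *ᵥ q.2 + q.1 • 1 = X *ᵥ (Xp *ᵥ y) := by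
  simp only [olsSet, Set.mem_ofPred_eq, hXp.olsObj_eq hβ₀]
  constructor
  · intro hq
    have hle := hq (0, Xp *ᵥ y)
    simp only [zero_smul, add_zero, sub_self, dotProduct_zero, add_le_iff_nonpos_right] at hle
    exact (sub_eq_zero.mp (dotProduct_self_eq_zero.mp
      (le_antisymm hle (dotProduct_self_nonneg _)))).symm
  · intro hq q'
    rw [hq, sub_self, dotProduct_zero, add_zero, le_add_iff_nonneg_right]
    exact dotProduct_self_nonneg _

theorem mem_olsSet_pinvSlope (hXp : IsMoorePenrose X Xp) (hβ₀ : X *ᵥ β₀ = 1) (μ : ℝ) :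
    (μ, pinvSlope Xp y μ) ∈ olsSet X y := by
  rw [hXp.mem_olsSet_iff hβ₀, pinvSlope_eq_sub_smul, mulVec_sub, mulVec_smul,
    hXp.mulVec_mulVec_of_mulVec_eq hβ₀, sub_add_cancel]

theorem dotProduct_self_eq_of_mem_olsSet (hXp : IsMoorePenrose X Xp) (hβ₀ : X *ᵥ β₀ = 1)
    (hu : (Xp *ᵥ 1) ⬝ᵥ (Xp *ᵥ 1) ≠ 0) {μ : ℝ} {β : Fin p → ℝ} (hq : (μ, β) ∈ olsSet X y) :
    β ⬝ᵥ β = pinvSlope Xp y (pinvIntercept Xp y) ⬝ᵥ pinvSlope Xp y (pinvIntercept Xp y) +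
      (Xp *ᵥ 1) ⬝ᵥ (Xp *ᵥ 1) * (μ - pinvIntercept Xp y) ^ 2 +
      (β - pinvSlope Xp y μ) ⬝ᵥ (β - pinvSlope Xp y μ) := by
  have hker : X *ᵥ (β - pinvSlope Xp y μ) = 0 := by
    rw [mulVec_sub, sub_eq_zero, ← add_left_inj (μ • 1), (hXp.mem_olsSet_iff hβ₀ _).mp hq,
      ← (hXp.mem_olsSet_iff hβ₀ _).mp (hXp.mem_olsSet_pinvSlope hβ₀ μ)]
  have horth : pinvSlope Xp y μ ⬝ᵥ (β - pinvSlope Xp y μ) = 0 :=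
    hXp.mulVec_dotProduct_of_mulVec_eq_zero _ hker
  calc β ⬝ᵥ β = (pinvSlope Xp y μ + (β - pinvSlope Xp y μ)) ⬝ᵥ
        (pinvSlope Xp y μ + (β - pinvSlope Xp y μ)) := by rw [add_sub_cancel]
    _ = _ := by
      rw [dotProduct_self_add_of_dotProduct_eq_zero horth, pinvSlope_eq_sub_smul,
        dotProduct_sub_smul_self hu, ← pinvSlope_eq_sub_smul, pinvIntercept]

theorem pinvSlope_dotProduct_le_of_mem_olsSet (hXp : IsMoorePenrose X Xp) (hβ₀ : X *ᵥ β₀ = 1)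
    (hu : (Xp *ᵥ 1) ⬝ᵥ (Xp *ᵥ 1) ≠ 0) {μ : ℝ} {β : Fin p → ℝ} (hq : (μ, β) ∈ olsSet X y) :
    pinvSlope Xp y (pinvIntercept Xp y) ⬝ᵥ pinvSlope Xp y (pinvIntercept Xp y) ≤ β ⬝ᵥ β := by
  nlinarith [hXp.dotProduct_self_eq_of_mem_olsSet hβ₀ hu hq, dotProduct_self_nonneg (Xp *ᵥ 1),
    dotProduct_self_nonneg (β - pinvSlope Xp y μ), sq_nonneg (μ - pinvIntercept Xp y)]

theorem eq_pinvIntercept_of_mem_olsSet (hXp : IsMoorePenrose X Xp) (hβ₀ : X *ᵥ β₀ = 1)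
    (hu : (Xp *ᵥ 1) ⬝ᵥ (Xp *ᵥ 1) ≠ 0) {μ : ℝ} {β : Fin p → ℝ} (hq : (μ, β) ∈ olsSet X y)
    (hle : β ⬝ᵥ β ≤ pinvSlope Xp y (pinvIntercept Xp y) ⬝ᵥ pinvSlope Xp y (pinvIntercept Xp y)) :
    μ = pinvIntercept Xp y ∧ β = pinvSlope Xp y μ := by
  have hu₀ := dotProduct_self_nonneg (Xp *ᵥ 1)
  have hsum : (Xp *ᵥ 1) ⬝ᵥ (Xp *ᵥ 1) * (μ - pinvIntercept Xp y) ^ 2 +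
      (β - pinvSlope Xp y μ) ⬝ᵥ (β - pinvSlope Xp y μ) = 0 := by
    nlinarith [hXp.dotProduct_self_eq_of_mem_olsSet hβ₀ hu hq,
      dotProduct_self_nonneg (β - pinvSlope Xp y μ), sq_nonneg (μ - pinvIntercept Xp y)]
  obtain ⟨hμ, hβ⟩ := (add_eq_zero_iff_of_nonneg (mul_nonneg hu₀ (sq_nonneg _))
    (dotProduct_self_nonneg _)).mp hsum
  refine ⟨?_, sub_eq_zero.mp (dotProduct_self_eq_zero.mp hβ)⟩
  rw [mul_eq_zero, or_iff_right hu, sq_eq_zero_iff, sub_eq_zero] at hμ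
  exact hμ

end IsMoorePenrose

end OLS

/-- if `1ₙ ∈ col(X)` and `K_X = (X Xᵀ)⁺`, then `1ₙᵀ K_X 1ₙ > 0`, the
minimum-norm OLS estimator exists, and it satisfies
`μ̂ = (1ₙᵀ K_X y)/(1ₙᵀ K_X 1ₙ)` and `β̂ = X⁺(y − μ̂ 1ₙ)`. -/
theorem stmt2 {n p : ℕ} (hn : 1 ≤ n) (X : Matrix (Fin n) (Fin p) ℝ) (y : Fin n → ℝ)
    (Xp : Matrix (Fin p) (Fin n) ℝ) (hXp : IsMoorePenrose X Xp)
    (Kp : Matrix (Fin n) (Fin n) ℝ) (hKp : IsMoorePenrose (X * Xᵀ) Kp)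
    (hcol : ∃ β : Fin p → ℝ, X.mulVec β = fun _ => (1 : ℝ)) :
    (0 : ℝ) < (fun _ => (1 : ℝ)) ⬝ᵥ (Kp.mulVec fun _ => (1 : ℝ)) ∧
    (∃ q : ℝ × (Fin p → ℝ), q ∈ olsSet X y ∧
        ∀ q' ∈ olsSet X y, ∑ j, q.2 j ^ 2 ≤ ∑ j, q'.2 j ^ 2) ∧
    ∀ (μhat : ℝ) (βhat : Fin p → ℝ),
      (μhat, βhat) ∈ olsSet X y →
      (∀ q' ∈ olsSet X y, ∑ j, βhat j ^ 2 ≤ ∑ j, q'.2 j ^ 2) →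
      μhat = ((fun _ => (1 : ℝ)) ⬝ᵥ (Kp.mulVec y)) /
             ((fun _ => (1 : ℝ)) ⬝ᵥ (Kp.mulVec fun _ => (1 : ℝ))) ∧
      βhat = Xp.mulVec (y - μhat • fun _ => (1 : ℝ)) := by
  simp only [← Pi.one_def, ← dotProduct_self_eq_sum_sq] at hcol ⊢
  obtain ⟨β₀, hβ₀⟩ := hcol
  have hK (v : Fin n → ℝ) : 1 ⬝ᵥ Kp *ᵥ v = (Xp *ᵥ 1) ⬝ᵥ (Xp *ᵥ v) := by
    rw [hKp.unique hXp.mul_transpose_self, dotProduct_mulVec_transpose_mul_self]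
  have hu : 0 < (Xp *ᵥ 1) ⬝ᵥ (Xp *ᵥ 1) := by
    refine (dotProduct_self_nonneg _).lt_of_ne' fun h0 => ?_
    have h1 := congrFun (hXp.mulVec_mulVec_of_mulVec_eq hβ₀) ⟨0, hn⟩
    rw [dotProduct_self_eq_zero.mp h0] at h1
    simp at h1
  have hmem := hXp.mem_olsSet_pinvSlope (y := y) hβ₀ (pinvIntercept Xp y)
  refine ⟨hK 1 ▸ hu, ⟨_, hmem, fun q hq => hXp.pinvSlope_dotProduct_le_of_mem_olsSet hβ₀ hu.ne' hq⟩,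
    fun μ β hq hmin => ?_⟩
  rw [hK, hK]
  exact hXp.eq_pinvIntercept_of_mem_olsSet hβ₀ hu.ne' hq (hmin _ hmem)
end

section
/- Almost surely, for every t ∈ {1,…,n₁}, the martingale increment satisfies D_t = E[f(S₁) | F_t] − E[f(S₁) | F_{t−1}] = −α_t · (1/(m_t − 1)) Σ_{j ∈ R_{t−1}∖{Π(t)}} [ binom(m_t − 2, ℓ_t − 1)^{−1} Σ_{T ⊆ R_{t−1}∖{Π(t), j}, |T| = ℓ_t − 1} Δ_{Π(t), j} f( S^past_{t−1} ∪ {Π(t)} ∪ T ) ], where α_t = (m_t − ℓ_t)/m_t = n₀/(n − t + 1) ∈ (0,1); that is, the increment is −α_t times the conditional average, over a uniform competitor J in R_{t−1}∖{Π(t)} and a uniform completion set T of size ℓ_t − 1 from R_{t−1}∖{Π(t),J}, of the one-swap sensitivity Δ_{Π(t),J} f evaluated at the proxy set S^past_{t−1} ∪ {Π(t)} ∪ T. -/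
open MeasureTheory Finset

noncomputable section

/-- Everything on the (finite) permutation space is measurable. -/
instance permMeasurableSpace (n : ℕ) : MeasurableSpace (Equiv.Perm (Fin n)) := ⊤

/-- The uniform probability measure on permutations of `{1,…,n}` (complete randomization). -/
def unifPerm (n : ℕ) : Measure (Equiv.Perm (Fin n)) :=
  ((Fintype.card (Equiv.Perm (Fin n)) : ENNReal))⁻¹ • Measure.count

/-- The set `{Π(1),…,Π(k)}` of the first `k` revealed units. -/
def Spast (n k : ℕ) (π : Equiv.Perm (Fin n)) : Finset (Fin n) :=
  (Finset.univ : Finset (Fin (min k n))).image fun i => π (Fin.castLE (min_le_right k n) i)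

/-- The assignment-exposure σ-algebra `F_t = σ(Π(1),…,Π(t))`. -/
def revealF (n : ℕ) (t : ℕ) : MeasurableSpace (Equiv.Perm (Fin n)) :=
  MeasurableSpace.comap
    (fun π => fun i : Fin (min t n) => π (Fin.castLE (min_le_right t n) i)) ⊤

/-- The Doob martingale `M_t = E[f(S₁) | F_t]`. -/
def doobM (n n₁ : ℕ) (f : Finset (Fin n) → ℝ) (t : ℕ) : Equiv.Perm (Fin n) → ℝ :=
  (unifPerm n)[fun π => f (Spast n n₁ π)|revealF n t]

/-- Martingale increments `D_t = M_t − M_{t−1}`. -/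
def doobD (n n₁ : ℕ) (f : Finset (Fin n) → ℝ) (t : ℕ) : Equiv.Perm (Fin n) → ℝ :=
  fun π => doobM n n₁ f t π - doobM n n₁ f (t - 1) π

/-- Conditional variance `Var(D_t | F_{t−1}) = E[D_t² | F_{t−1}] − (E[D_t | F_{t−1}])²`. -/
def condVarD (n n₁ : ℕ) (f : Finset (Fin n) → ℝ) (t : ℕ) : Equiv.Perm (Fin n) → ℝ :=
  fun π =>
    ((unifPerm n)[fun ω => doobD n n₁ f t ω ^ 2|revealF n (t - 1)]) π -
      (((unifPerm n)[doobD n n₁ f t|revealF n (t - 1)]) π) ^ 2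

end

/-- One-swap sensitivity `Δ_{ij} f(S) = f((S∖{i}) ∪ {j}) − f(S)`. -/
noncomputable def swapSens {n : ℕ} (f : Finset (Fin n) → ℝ) (i j : Fin n)
    (S : Finset (Fin n)) : ℝ :=
  f (insert j (S.erase i)) - f S

/-!
Conditionally on `F_t`, i.e. on the prefix `Π(1), …, Π(t)`, the completion `S₁ ∖ S^past_t` is
uniform among the `(n₁ - t)`-subsets of the unrevealed units: the permutations fixing the revealed
set pointwise act by left multiplication on the fibre of the prefix and transitively on these
subsets, so all fibres of the completion map have the same size. Hence `M_t` is the average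
`completionAvg` of `f` over completions of `S^past_t`. Since `S^past_t = S^past_{t-1} ∪ {Π(t)}`,
`D_t` is a difference of two such averages, and the claimed form is a double count: summing
`Δ_{Π(t), j} f` over `j` and `T` counts every `ℓ_t`-completion of `S^past_{t-1}` avoiding `Π(t)`
`ℓ_t` times (with `+`) and every one containing `Π(t)` `m_t - ℓ_t` times (with `-`).
-/

namespace Finset

variable {α : Type*} [DecidableEq α]

theorem card_mul_sum_comp_of_card_fiber_eq {X Y : Type*} [DecidableEq Y] {A : Finset X}
    {B : Finset Y} {φ : X → Y} (hφ : ∀ x ∈ A, φ x ∈ B)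
    (hfiber : ∀ y ∈ B, ∀ y' ∈ B, #{x ∈ A | φ x = y} = #{x ∈ A | φ x = y'}) (F : Y → ℝ) :
    #B * ∑ x ∈ A, F (φ x) = #A * ∑ y ∈ B, F y := by
  rcases B.eq_empty_or_nonempty with rfl | ⟨y₀, hy₀⟩
  · simp [eq_empty_of_forall_notMem fun x hx => notMem_empty _ (hφ x hx)]
  have hsum : ∑ x ∈ A, F (φ x) = #{x ∈ A | φ x = y₀} * ∑ y ∈ B, F y := by
    rw [← sum_fiberwise_of_maps_to hφ, mul_sum]
    refine sum_congr rfl fun y hy => ?_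
    rw [sum_congr rfl fun x hx => by rw [(mem_filter.1 hx).2], sum_const, hfiber y hy y₀ hy₀,
      nsmul_eq_mul]
  have hcard : #A = #B * #{x ∈ A | φ x = y₀} := by
    rw [card_eq_sum_card_fiberwise hφ, sum_congr rfl fun y hy => hfiber y hy y₀ hy₀, sum_const,
      smul_eq_mul]
  rw [hsum, hcard]
  push_cast
  ring

theorem exists_perm_fixing_image_eq {P T T' : Finset α}
    (hT : Disjoint P T) (hT' : Disjoint P T') (hcard : #T = #T') :
    ∃ ρ : Equiv.Perm α, (∀ x ∈ P, ρ x = x) ∧ T.image ρ = T' := by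
  have hsub : ∀ {U : Finset α}, Disjoint P U → U = (U.subtype (· ∉ P)).map (.subtype _) :=
    fun hU => (subtype_map_of_mem fun _ hx => disjoint_right.1 hU hx).symm
  have hcard_sub : ∀ {U : Finset α}, Disjoint P U → #(U.subtype (· ∉ P)) = #U :=
    fun hU => by rw [hsub hU, card_map, ← hsub hU]
  obtain ⟨σ, hσ⟩ := (Set.powersetCard.isPretransitive (α := {x // x ∉ P}) (n := #T)).exists_smul_eq
    ⟨_, hcard_sub hT⟩ ⟨_, (hcard_sub hT').trans hcard.symm⟩
  refine ⟨Equiv.Perm.ofSubtype σ,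
    fun x hx => Equiv.Perm.ofSubtype_apply_of_not_mem σ (not_not.2 hx), ?_⟩
  have hσ' : (T.subtype (· ∉ P)).image σ = T'.subtype (· ∉ P) := by
    simpa [Finset.smul_finset_def, Equiv.Perm.smul_def] using congrArg Subtype.val hσ
  rw [hsub hT, hsub hT', ← hσ']
  simp only [map_eq_image, image_image]
  congr 1
  exact funext (Equiv.Perm.ofSubtype_apply_coe σ)

theorem sum_powersetCard_succ_insert {M : Type*} [AddCommMonoid M] {s : Finset α} {i : α}
    (hi : i ∉ s) (k : ℕ) (g : Finset α → M) :
    ∑ U ∈ powersetCard (k + 1) (insert i s), g U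
      = ∑ U ∈ powersetCard (k + 1) s, g U + ∑ T ∈ powersetCard k s, g (insert i T) := by
  have hiT : ∀ T ∈ powersetCard k s, i ∉ T := fun T hT hiT => hi ((mem_powersetCard.1 hT).1 hiT)
  rw [powersetCard_succ_insert hi, sum_union, sum_image]
  · intro T hT T' hT' h
    rw [← erase_insert (hiT T hT), h, erase_insert (hiT T' hT')]
  · refine disjoint_left.2 fun U hU hU' => ?_
    obtain ⟨T, -, rfl⟩ := mem_image.1 hU'
    exact hi ((mem_powersetCard.1 hU).1 (mem_insert_self i T))

theorem sum_sum_powersetCard_erase (s : Finset α) (k : ℕ) (g : Finset α → ℝ) :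
    ∑ j ∈ s, ∑ T ∈ powersetCard k (s.erase j), g T
      = ((#s - k : ℕ) : ℝ) * ∑ T ∈ powersetCard k s, g T := by
  rw [sum_comm' (t' := powersetCard k s) (s' := fun T => s \ T) (by
    intro j T
    simp only [mem_powersetCard, subset_erase, mem_sdiff]
    tauto)]
  rw [mul_sum]
  refine sum_congr rfl fun T hT => ?_
  rw [mem_powersetCard] at hT
  rw [sum_const, card_sdiff_of_subset hT.1, hT.2, nsmul_eq_mul]

theorem sum_sum_powersetCard_erase_insert (s : Finset α) (k : ℕ) (g : Finset α → ℝ) :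
    ∑ j ∈ s, ∑ T ∈ powersetCard k (s.erase j), g (insert j T)
      = ((k + 1 : ℕ) : ℝ) * ∑ U ∈ powersetCard (k + 1) s, g U := by
  have hinsert : ∀ j ∈ s, ∑ T ∈ powersetCard k (s.erase j), g (insert j T)
      = ∑ U ∈ powersetCard (k + 1) s with j ∈ U, g U := by
    intro j hj
    refine sum_nbij' (insert j) (fun U => U.erase j) ?_ ?_ ?_ ?_ (fun _ _ => rfl)
    all_goals intro T hT; simp only [mem_filter, mem_powersetCard, subset_erase] at hT ⊢; grind
  rw [sum_congr rfl hinsert, sum_comm' (t' := powersetCard (k + 1) s) (s' := fun U => U) (by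
    intro j U
    simp only [mem_filter, mem_powersetCard]
    constructor
    · rintro ⟨-, ⟨hU, hcard⟩, hj⟩; exact ⟨hj, hU, hcard⟩
    · rintro ⟨hj, hU, hcard⟩; exact ⟨hU hj, ⟨hU, hcard⟩, hj⟩), mul_sum]
  refine sum_congr rfl fun U hU => ?_
  rw [sum_const, (mem_powersetCard.mp hU).2, nsmul_eq_mul]

end Finset

theorem inv_choose_mul_sub_inv_choose_succ_mul {N k : ℕ} (hkN : k < N) (A B : ℝ) :
    ((N.choose k : ℕ) : ℝ)⁻¹ * B - (((N + 1).choose (k + 1) : ℕ) : ℝ)⁻¹ * (A + B) =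
      -(((N - k : ℕ) : ℝ) / ((N + 1 : ℕ) : ℝ)) * (((N : ℕ) : ℝ)⁻¹ *
        ((((N - 1).choose k : ℕ) : ℝ)⁻¹ * (((k + 1 : ℕ) : ℝ) * A - ((N - k : ℕ) : ℝ) * B))) := by
  have hc₁ : ((N : ℝ) + 1) * N.choose k = (N + 1).choose (k + 1) * ((k : ℝ) + 1) := by
    exact_mod_cast Nat.add_one_mul_choose_eq N k
  have hc₂ : ((N - 1).choose k : ℝ) * N = N.choose k * ((N : ℝ) - k) := by
    have h := Nat.choose_mul_succ_eq (N - 1) k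
    rw [Nat.sub_add_cancel (by omega : 1 ≤ N)] at h
    rw [← Nat.cast_sub hkN.le]
    exact_mod_cast h
  have : (0 : ℝ) < N.choose k := by exact_mod_cast Nat.choose_pos hkN.le
  have : (0 : ℝ) < (N - 1).choose k := by exact_mod_cast Nat.choose_pos (by omega)
  have : (0 : ℝ) < (N + 1).choose (k + 1) := by exact_mod_cast Nat.choose_pos (by omega)
  have : (0 : ℝ) < N := by exact_mod_cast (by omega : 0 < N)
  push_cast [Nat.cast_sub hkN.le]
  field_simp
  linear_combination (B * (N + 1).choose (k + 1) - N.choose k * (A + B)) * ((N : ℝ) + 1) * hc₂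
    - N.choose k * ((N : ℝ) - k) * (A + B) * hc₁

section CompletionAvg

variable {α : Type*} [Fintype α] [DecidableEq α]

noncomputable def completionAvg (f : Finset α → ℝ) (P : Finset α) (k : ℕ) : ℝ :=
  ((#Pᶜ).choose k : ℝ)⁻¹ * ∑ T ∈ powersetCard k Pᶜ, f (P ∪ T)

theorem completionAvg_insert_sub_completionAvg (f : Finset α → ℝ) {P : Finset α} {i : α}
    (hi : i ∉ P) {m ℓ : ℕ} (hm : #Pᶜ = m) (hℓ : 1 ≤ ℓ) (hℓm : ℓ < m) :
    completionAvg f (insert i P) (ℓ - 1) - completionAvg f P ℓ =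
      -(((m - ℓ : ℕ) : ℝ) / m) * (((m - 1 : ℕ) : ℝ)⁻¹ *
        ∑ j ∈ Pᶜ.erase i, (((m - 2).choose (ℓ - 1) : ℕ) : ℝ)⁻¹ *
          ∑ T ∈ powersetCard (ℓ - 1) ((Pᶜ.erase i).erase j),
            (f (P ∪ insert j T) - f (insert i P ∪ T))) := by
  obtain ⟨N, rfl⟩ : ∃ N, m = N + 1 := ⟨m - 1, by omega⟩
  obtain ⟨k, rfl⟩ : ∃ k, ℓ = k + 1 := ⟨ℓ - 1, by omega⟩
  set s := Pᶜ.erase i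
  have his : i ∉ s := notMem_erase i _
  have hs : #s = N := by rw [card_erase_of_mem (mem_compl.2 hi), hm]; rfl
  have hcompl : Pᶜ = insert i s := (insert_erase (mem_compl.2 hi)).symm
  have hsplit : ∑ U ∈ powersetCard (k + 1) Pᶜ, f (P ∪ U)
      = ∑ U ∈ powersetCard (k + 1) s, f (P ∪ U) + ∑ T ∈ powersetCard k s, f (insert i P ∪ T) := by
    rw [hcompl, sum_powersetCard_succ_insert his]
    simp only [union_insert, insert_union]
  have hswap : ∑ j ∈ s, ∑ T ∈ powersetCard k (s.erase j), (f (P ∪ insert j T) - f (insert i P ∪ T))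
      = ((k + 1 : ℕ) : ℝ) * ∑ U ∈ powersetCard (k + 1) s, f (P ∪ U)
        - ((N - k : ℕ) : ℝ) * ∑ T ∈ powersetCard k s, f (insert i P ∪ T) := by
    simp only [sum_sub_distrib, sum_sum_powersetCard_erase_insert s k (fun U => f (P ∪ U)),
      sum_sum_powersetCard_erase, hs]
  simp only [show N + 1 - 2 = N - 1 by omega, Nat.add_sub_cancel, Nat.add_sub_add_right]
  rw [← mul_sum, hswap, completionAvg, completionAvg, hsplit, compl_insert, hs, hm]
  exact inv_choose_mul_sub_inv_choose_succ_mul (by omega) _ _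

end CompletionAvg

theorem condExp_comap_ae_eq_comp {Ω β : Type*} [Fintype Ω] [MeasurableSpace Ω]
    [DiscreteMeasurableSpace Ω] [Fintype β] [DecidableEq β] {μ : Measure Ω} [IsFiniteMeasure μ]
    {g : Ω → β} {F : Ω → ℝ} {H : β → ℝ}
    (hfiber : ∀ b, ∑ ω with g ω = b, μ.real {ω} * F ω = ∑ ω with g ω = b, μ.real {ω} * H b) :
    μ[F | MeasurableSpace.comap g ⊤] =ᵐ[μ] H ∘ g := by
  refine (ae_eq_condExp_of_forall_setIntegral_eq (fun s _ => .of_discrete) .of_finite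
    (fun _ _ _ => Integrable.of_finite.integrableOn) ?_
    (measurable_from_top.comp (comap_measurable g)).aestronglyMeasurable).symm
  classical
  rintro _ ⟨A, -, rfl⟩ -
  have hA : g ⁻¹' A = ↑(univ.filter (g · ∈ A)) := by ext; simp
  rw [hA, setIntegral_finset _ Integrable.of_finite.integrableOn,
    setIntegral_finset _ Integrable.of_finite.integrableOn, sum_filter, sum_filter,
    ← sum_fiberwise univ g, ← sum_fiberwise univ g]
  refine sum_congr rfl fun b _ => ?_
  have hg : ∀ ω ∈ univ.filter (g · = b), g ω = b := fun ω hω => (mem_filter.1 hω).2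
  by_cases hb : b ∈ A
  · rw [sum_ite_of_true fun ω hω => hg ω hω ▸ hb, sum_ite_of_true fun ω hω => hg ω hω ▸ hb]
    simp only [smul_eq_mul, Function.comp_apply, hfiber b]
    exact sum_congr rfl fun ω hω => by rw [hg ω hω]
  · rw [sum_ite_of_false fun ω hω => hg ω hω ▸ hb, sum_ite_of_false fun ω hω => hg ω hω ▸ hb]

section Reveal

variable {n : ℕ}

instance : DiscreteMeasurableSpace (Equiv.Perm (Fin n)) := ⟨fun _ => trivial⟩

instance : IsProbabilityMeasure (unifPerm n) :=
  ⟨by simp [unifPerm, ENNReal.inv_mul_cancel]⟩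

theorem unifPerm_real_singleton (π : Equiv.Perm (Fin n)) :
    (unifPerm n).real {π} = (n.factorial : ℝ)⁻¹ := by
  simp [unifPerm, Measure.real, Fintype.card_perm]

theorem mem_Spast {k : ℕ} {π : Equiv.Perm (Fin n)} {x : Fin n} :
    x ∈ Spast n k π ↔ ∃ i : Fin n, i.1 < k ∧ π i = x := by
  simp only [Spast, mem_image, mem_univ, true_and]
  constructor
  · rintro ⟨i, rfl⟩
    exact ⟨_, lt_of_lt_of_le i.2 (min_le_left k n), rfl⟩
  · rintro ⟨i, hi, rfl⟩
    exact ⟨⟨i, lt_min hi i.2⟩, rfl⟩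

theorem card_Spast {k : ℕ} (hk : k ≤ n) (π : Equiv.Perm (Fin n)) : #(Spast n k π) = k := by
  rw [Spast, card_image_of_injective _ fun _ _ h => Fin.castLE_injective _ (π.injective h),
    card_univ, Fintype.card_fin, min_eq_left hk]

theorem card_compl_Spast {k : ℕ} (hk : k ≤ n) (π : Equiv.Perm (Fin n)) :
    #(Spast n k π)ᶜ = n - k := by
  rw [card_compl, card_Spast hk, Fintype.card_fin]

theorem Spast_mono {k k' : ℕ} (h : k ≤ k') (π : Equiv.Perm (Fin n)) :
    Spast n k π ⊆ Spast n k' π := fun _ hx => by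
  obtain ⟨i, hi, rfl⟩ := mem_Spast.1 hx
  exact mem_Spast.2 ⟨i, hi.trans_le h, rfl⟩

theorem Spast_mul (k : ℕ) (ρ π : Equiv.Perm (Fin n)) :
    Spast n k (ρ * π) = (Spast n k π).image ρ := by
  rw [Spast, Spast, image_image]
  rfl

theorem Spast_eq_insert {t : ℕ} (ht : 1 ≤ t) (htn : t ≤ n) (π : Equiv.Perm (Fin n)) :
    Spast n t π = insert (π ⟨t - 1, by omega⟩) (Spast n (t - 1) π) := by
  ext x
  simp only [mem_insert, mem_Spast]
  constructor
  · rintro ⟨i, hi, rfl⟩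
    rcases eq_or_lt_of_le (Nat.le_sub_one_of_lt hi) with h | h
    · exact .inl (congrArg π (Fin.ext h))
    · exact .inr ⟨i, h, rfl⟩
  · rintro (rfl | ⟨i, hi, rfl⟩)
    · exact ⟨_, by simp only; omega, rfl⟩
    · exact ⟨i, by omega, rfl⟩

theorem apply_notMem_Spast {t : ℕ} (ht : 1 ≤ t) (htn : t ≤ n) (π : Equiv.Perm (Fin n)) :
    π ⟨t - 1, by omega⟩ ∉ Spast n (t - 1) π := by
  rw [mem_Spast]
  rintro ⟨i, hi, h⟩
  have := congrArg Fin.val (π.injective h)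
  simp only at this
  omega

-- Definitionally `revealF n t = MeasurableSpace.comap (revealMap n t) ⊤` and
-- `Spast n t π = univ.image (revealMap n t π)`.
def revealMap (n t : ℕ) (π : Equiv.Perm (Fin n)) : Fin (min t n) → Fin n :=
  fun i => π (Fin.castLE (min_le_right t n) i)

theorem revealMap_mul (t : ℕ) (ρ π : Equiv.Perm (Fin n)) :
    revealMap n t (ρ * π) = ρ ∘ revealMap n t π :=
  rfl

theorem card_revealMap_sdiff_eq {n₁ t : ℕ} (v : Fin (min t n) → Fin n) {T T' : Finset (Fin n)}
    (hT : Disjoint (univ.image v) T) (hT' : Disjoint (univ.image v) T') (hcard : #T = #T') :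
    #{π | revealMap n t π = v ∧ Spast n n₁ π \ univ.image v = T}
      = #{π | revealMap n t π = v ∧ Spast n n₁ π \ univ.image v = T'} := by
  set P := univ.image v
  have htransport : ∀ ρ : Equiv.Perm (Fin n), (∀ x ∈ P, ρ x = x) → ∀ (π : Equiv.Perm (Fin n)) U,
      revealMap n t π = v ∧ Spast n n₁ π \ P = U →
        revealMap n t (ρ * π) = v ∧ Spast n n₁ (ρ * π) \ P = U.image ρ := by
    rintro ρ hρ π U ⟨hπ, rfl⟩
    have hρP : P.image ρ = P := by
      conv_rhs => rw [← image_id (s := P)]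
      exact image_congr hρ
    refine ⟨?_, by rw [image_sdiff _ _ ρ.injective, hρP, Spast_mul]⟩
    rw [revealMap_mul, hπ]
    exact funext fun i => hρ _ (mem_image_of_mem v (mem_univ i))
  obtain ⟨ρ, hρ, hρT⟩ := exists_perm_fixing_image_eq hT hT' hcard
  have hρ' : ∀ x ∈ P, ρ⁻¹ x = x := fun x hx => by rw [Equiv.Perm.inv_eq_iff_eq, hρ x hx]
  have hρT' : T'.image ⇑ρ⁻¹ = T := by
    rw [← hρT, image_image]
    simp
  refine card_bij' (fun π _ => ρ * π) (fun π _ => ρ⁻¹ * π) (fun π hπ => ?_) (fun π hπ => ?_)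
    (by simp) (by simp)
  · simpa [← hρT] using htransport ρ hρ π T (mem_filter.1 hπ).2
  · simpa [← hρT'] using htransport ρ⁻¹ hρ' π T' (mem_filter.1 hπ).2

theorem sum_fiber_revealMap {n₁ t : ℕ} (hn₁ : n₁ ≤ n) (ht : t ≤ n₁) (f : Finset (Fin n) → ℝ)
    (v : Fin (min t n) → Fin n) :
    ∑ π with revealMap n t π = v, f (Spast n n₁ π)
      = #{π | revealMap n t π = v} * completionAvg f (univ.image v) (n₁ - t) := by
  set A := univ.filter fun π => revealMap n t π = v
  set P := univ.image v
  rcases A.eq_empty_or_nonempty with hA | ⟨π₀, hπ₀⟩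
  · simp [hA]
  have hP : ∀ π ∈ A, Spast n t π = P := fun π hπ => by
    change univ.image (revealMap n t π) = P
    rw [(mem_filter.1 hπ).2]
  have hPS : ∀ π ∈ A, P ⊆ Spast n n₁ π := fun π hπ => hP π hπ ▸ Spast_mono ht π
  have hPc : #Pᶜ = n - t := hP π₀ hπ₀ ▸ card_compl_Spast (ht.trans hn₁) π₀
  have hmaps : ∀ π ∈ A, Spast n n₁ π \ P ∈ powersetCard (n₁ - t) Pᶜ := fun π hπ => by
    rw [mem_powersetCard, card_sdiff_of_subset (hPS π hπ), card_Spast hn₁, ← hP π hπ,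
      card_Spast (ht.trans hn₁)]
    exact ⟨fun x hx => mem_compl.2 (mem_sdiff.1 hx).2, rfl⟩
  have hfiber : ∀ T ∈ powersetCard (n₁ - t) Pᶜ, ∀ T' ∈ powersetCard (n₁ - t) Pᶜ,
      #{π ∈ A | Spast n n₁ π \ P = T} = #{π ∈ A | Spast n n₁ π \ P = T'} := by
    intro T hT T' hT'
    rw [mem_powersetCard, subset_compl_iff_disjoint_left] at hT hT'
    simpa only [A, filter_filter] using
      card_revealMap_sdiff_eq v hT.1 hT'.1 (hT.2.trans hT'.2.symm)
  have hcount := card_mul_sum_comp_of_card_fiber_eq hmaps hfiber fun T => f (P ∪ T)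
  rw [card_powersetCard, hPc, sum_congr rfl fun π hπ => by rw [union_sdiff_of_subset (hPS π hπ)]]
    at hcount
  have hC : ((n - t).choose (n₁ - t) : ℝ) ≠ 0 := by
    exact_mod_cast (Nat.choose_pos (by omega)).ne'
  rw [completionAvg, hPc, mul_left_comm, ← hcount, inv_mul_cancel_left₀ hC]

theorem doobM_ae_eq_completionAvg {n₁ t : ℕ} (hn₁ : n₁ ≤ n) (ht : t ≤ n₁)
    (f : Finset (Fin n) → ℝ) :
    doobM n n₁ f t =ᵐ[unifPerm n] fun π => completionAvg f (Spast n t π) (n₁ - t) :=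
  condExp_comap_ae_eq_comp (g := revealMap n t) (F := fun π => f (Spast n n₁ π))
    (H := fun v => completionAvg f (univ.image v) (n₁ - t)) fun v => by
    simp only [unifPerm_real_singleton, ← mul_sum, sum_fiber_revealMap hn₁ ht f v, sum_const,
      nsmul_eq_mul]

theorem swapSens_insert_union (f : Finset (Fin n) → ℝ) {i j : Fin n}
    {P T : Finset (Fin n)} (hiP : i ∉ P) (hiT : i ∉ T) :
    swapSens f i j (insert i P ∪ T) = f (P ∪ insert j T) - f (insert i P ∪ T) := by
  rw [swapSens, insert_union, erase_insert (by simp [hiP, hiT]), union_insert]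

end Reveal

/-- reveal–swap representation of the Doob martingale increment: a.s., for every
`1 ≤ t ≤ n₁`, `D_t` equals `−α_t` times the average (over a uniform competitor `J` in
`R_{t−1}∖{Π(t)}` and a uniform completion set `T`) of the one-swap sensitivity at the proxy
set, with `α_t = (m_t − ℓ_t)/m_t = n₀/(n − t + 1) ∈ (0,1)`. -/
theorem stmt4 {n n₁ : ℕ} (h2 : n₁ ≤ n - 1)
    (f : Finset (Fin n) → ℝ) :
    ∀ᵐ π ∂(unifPerm n), ∀ (t : ℕ) (ht1 : 1 ≤ t) (ht2 : t ≤ n₁),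
      (0 : ℝ) < ((n - n₁ : ℕ) : ℝ) / ((n - t + 1 : ℕ) : ℝ) ∧
      ((n - n₁ : ℕ) : ℝ) / ((n - t + 1 : ℕ) : ℝ) < 1 ∧
      (((n - t + 1) - (n₁ - t + 1) : ℕ) : ℝ) / ((n - t + 1 : ℕ) : ℝ)
        = ((n - n₁ : ℕ) : ℝ) / ((n - t + 1 : ℕ) : ℝ) ∧
      doobD n n₁ f t π =
        -(((n - n₁ : ℕ) : ℝ) / ((n - t + 1 : ℕ) : ℝ)) *
          ((((n - t + 1 - 1 : ℕ)) : ℝ)⁻¹ *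
            ∑ j ∈ ((Spast n (t - 1) π)ᶜ).erase (π ⟨t - 1, by omega⟩),
              ((Nat.choose (n - t + 1 - 2) (n₁ - t + 1 - 1) : ℝ)⁻¹ *
                ∑ T ∈ Finset.powersetCard (n₁ - t + 1 - 1)
                    ((((Spast n (t - 1) π)ᶜ).erase (π ⟨t - 1, by omega⟩)).erase j),
                  swapSens f (π ⟨t - 1, by omega⟩) j
                    (insert (π ⟨t - 1, by omega⟩) (Spast n (t - 1) π) ∪ T))) := by
  have hM : ∀ᵐ π ∂unifPerm n, ∀ t, t ≤ n₁ →
      doobM n n₁ f t π = completionAvg f (Spast n t π) (n₁ - t) :=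
    ae_all_iff.2 fun t => Filter.eventually_imp_distrib_left.2 fun ht =>
      doobM_ae_eq_completionAvg (by omega) ht f
  filter_upwards [hM] with π hπ t ht1 ht2
  have hα : n - n₁ = (n - t + 1) - (n₁ - t + 1) := by omega
  have hm : 0 < n - t + 1 := by omega
  refine ⟨div_pos (by exact_mod_cast (by omega : 0 < n - n₁)) (by positivity), ?_, by rw [hα], ?_⟩
  · rw [div_lt_one (by positivity)]
    exact_mod_cast (by omega : n - n₁ < n - t + 1)
  have hi := apply_notMem_Spast ht1 (by omega) π
  have hdiff := completionAvg_insert_sub_completionAvg f hi (m := n - t + 1) (ℓ := n₁ - t + 1)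
    ((card_compl_Spast (by omega) π).trans (by omega)) (by omega) (by omega)
  rw [doobD, hπ t ht2, hπ (t - 1) (by omega), Spast_eq_insert ht1 (by omega),
    show n₁ - (t - 1) = n₁ - t + 1 by omega, hα]
  simp only [Nat.add_sub_cancel] at hdiff ⊢
  rw [hdiff]
  congr 2
  refine sum_congr rfl fun j _ => congrArg _ (sum_congr rfl fun T hT => ?_)
  have hiT : π ⟨t - 1, _⟩ ∉ T := fun h =>
    notMem_erase _ _ (erase_subset _ _ ((mem_powersetCard.1 hT).1 h))
  exact (swapSens_insert_union f hi hiT).symm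
end

section
/- Let Q ∈ ℝ^{s×s} be symmetric, let y, v ∈ ℝ^s and κ ∈ ℝ, and set Q' := Q + κ (Qv)(Qv)ᵀ. Assume 1ᵀ Q 1 ≠ 0 and 1ᵀ Q' 1 ≠ 0, where 1 is the all-ones vector in ℝ^s. Define μ_y(Q) := (1ᵀ Q y)/(1ᵀ Q 1) and y^c := y − μ_y(Q)·1. Then μ_y(Q') − μ_y(Q) = κ · (1ᵀ Q v) · (vᵀ Q y^c) / (1ᵀ Q' 1). -/
/-!
Write `a = 1ᵀQ1`, `b = 1ᵀQy`, `c = 1ᵀQv`, `d = vᵀQy`. Because `Q` is symmetric, the rank-one term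
`κ (Qv)(Qv)ᵀ` adds `κ (xᵀQv)(vᵀQz)` to every bilinear form `xᵀQz`, so `1ᵀQ'1 = a + κc²` and
`1ᵀQ'y = b + κcd`, while `vᵀQ y^c = d - (b/a) c`. The claim is then the scalar identity
`(b + κcd)/(a + κc²) - b/a = κc (d - (b/a) c)/(a + κc²)`.
-/

open Matrix

/-- The intercept-type ratio `μ_y(Q) = (1ᵀ Q y)/(1ᵀ Q 1)`. -/
noncomputable def muRatio {s : ℕ} (Q : Matrix (Fin s) (Fin s) ℝ) (y : Fin s → ℝ) : ℝ :=
  ((fun _ => (1 : ℝ)) ⬝ᵥ Q.mulVec y) / ((fun _ => (1 : ℝ)) ⬝ᵥ Q.mulVec fun _ => (1 : ℝ))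

namespace Matrix

variable {n R : Type*} [Fintype n] [CommSemiring R]

theorem dotProduct_vecMulVec_mulVec (x w u z : n → R) :
    x ⬝ᵥ vecMulVec w u *ᵥ z = (x ⬝ᵥ w) * (u ⬝ᵥ z) := by
  rw [dotProduct_mulVec, vecMul_vecMulVec, smul_dotProduct, smul_eq_mul]

theorem dotProduct_mulVec_comm_of_transpose_eq {Q : Matrix n n R} (hQ : Qᵀ = Q) (x z : n → R) :
    x ⬝ᵥ Q *ᵥ z = z ⬝ᵥ Q *ᵥ x := by
  rw [← dotProduct_transpose_mulVec, hQ]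

theorem dotProduct_add_smul_vecMulVec_mulVec {Q : Matrix n n R} (hQ : Qᵀ = Q) (κ : R)
    (v x z : n → R) :
    x ⬝ᵥ (Q + κ • vecMulVec (Q *ᵥ v) (Q *ᵥ v)) *ᵥ z =
      x ⬝ᵥ Q *ᵥ z + κ * (x ⬝ᵥ Q *ᵥ v) * (v ⬝ᵥ Q *ᵥ z) := by
  rw [add_mulVec, dotProduct_add, smul_mulVec, dotProduct_smul, dotProduct_vecMulVec_mulVec,
    dotProduct_comm (Q *ᵥ v), dotProduct_mulVec_comm_of_transpose_eq hQ z v, smul_eq_mul,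
    mul_assoc]

end Matrix

theorem div_sub_div_of_rankOne_update {K : Type*} [Field K] {a b c d κ : K} (ha : a ≠ 0)
    (ha' : a + κ * c * c ≠ 0) :
    (b + κ * c * d) / (a + κ * c * c) - b / a = κ * c * (d - b / a * c) / (a + κ * c * c) := by
  rw [div_sub_div _ _ ha' ha, div_eq_div_iff (mul_ne_zero ha' ha) ha']
  field_simp
  ring

/-- rank-one ratio update: for symmetric `Q` and
`Q' = Q + κ (Qv)(Qv)ᵀ` with `1ᵀQ1 ≠ 0` and `1ᵀQ'1 ≠ 0`,
`μ_y(Q') − μ_y(Q) = κ (1ᵀQv)(vᵀQ y^c)/(1ᵀQ'1)` where `y^c = y − μ_y(Q)·1`. -/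
theorem stmt11 {s : ℕ} (Q : Matrix (Fin s) (Fin s) ℝ) (hQ : Qᵀ = Q)
    (y v : Fin s → ℝ) (κ : ℝ) (Q' : Matrix (Fin s) (Fin s) ℝ)
    (hQ' : Q' = Q + κ • vecMulVec (Q.mulVec v) (Q.mulVec v))
    (h1 : (fun _ => (1 : ℝ)) ⬝ᵥ (Q.mulVec fun _ => (1 : ℝ)) ≠ 0)
    (h2 : (fun _ => (1 : ℝ)) ⬝ᵥ (Q'.mulVec fun _ => (1 : ℝ)) ≠ 0) :
    muRatio Q' y - muRatio Q y =
      κ * ((fun _ => (1 : ℝ)) ⬝ᵥ Q.mulVec v) *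
          (v ⬝ᵥ Q.mulVec (y - muRatio Q y • fun _ => (1 : ℝ))) /
        ((fun _ => (1 : ℝ)) ⬝ᵥ Q'.mulVec fun _ => (1 : ℝ)) := by
  set one : Fin s → ℝ := fun _ => 1
  have hcentered : v ⬝ᵥ Q *ᵥ (y - muRatio Q y • one) =
      v ⬝ᵥ Q *ᵥ y - muRatio Q y * (one ⬝ᵥ Q *ᵥ v) := by
    rw [mulVec_sub, dotProduct_sub, mulVec_smul, dotProduct_smul, smul_eq_mul,
      dotProduct_mulVec_comm_of_transpose_eq hQ v one]
  subst hQ'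
  rw [hcentered]
  unfold muRatio
  simp only [dotProduct_add_smul_vecMulVec_mulVec hQ] at h2 ⊢
  rw [dotProduct_mulVec_comm_of_transpose_eq hQ v one] at h2 ⊢
  exact div_sub_div_of_rankOne_update h1 h2
end

section
/- Let A ∈ ℝ^{n×m}, a ∈ ℝⁿ, and Ã := [A a] ∈ ℝ^{n×(m+1)}, and partition Ã⁺ = [B; b] with B ∈ ℝ^{m×n} and row vector b ∈ ℝ^{1×n}. Then A⁺ = B + d b, where d := B(a − b⁺) if b A = 0 and d := (1 − b a)^{−1} B a if b A ≠ 0; moreover, in the case b A ≠ 0 one has b a < 1, so the inverse (1 − b a)^{−1} is well defined. -/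
open Matrix

section Helpers
variable {p q r : ℕ}

lemma mul_vecMulVec (M : Matrix (Fin p) (Fin q) ℝ) (u : Fin q → ℝ) (v : Fin r → ℝ) :
    M * vecMulVec u v = vecMulVec (M *ᵥ u) v := by
  ext i j
  simp [Matrix.mul_apply, vecMulVec_apply, Matrix.mulVec, dotProduct, Finset.sum_mul, mul_assoc]

lemma vecMulVec_mul (u : Fin p → ℝ) (v : Fin q → ℝ) (M : Matrix (Fin q) (Fin r) ℝ) :
    vecMulVec u v * M = vecMulVec u (v ᵥ* M) := by
  ext i j
  simp [Matrix.mul_apply, vecMulVec_apply, Matrix.vecMul, dotProduct, Finset.mul_sum, mul_assoc,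
    mul_left_comm]

lemma vecMulVec_mulVec (u : Fin p → ℝ) (v : Fin q → ℝ) (w : Fin q → ℝ) :
    (vecMulVec u v) *ᵥ w = (v ⬝ᵥ w) • u := by
  ext i
  simp [vecMulVec_apply, Matrix.mulVec, dotProduct, Finset.mul_sum, mul_assoc, mul_comm,
    mul_left_comm]

lemma vecMul_vecMulVec (w : Fin p → ℝ) (u : Fin p → ℝ) (v : Fin q → ℝ) :
    w ᵥ* vecMulVec u v = (w ⬝ᵥ u) • v := by
  ext j
  simp [vecMulVec_apply, Matrix.vecMul, dotProduct, Finset.sum_mul, mul_assoc]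

lemma transpose_vecMulVec (u : Fin p → ℝ) (v : Fin q → ℝ) :
    (vecMulVec u v)ᵀ = vecMulVec v u := by
  ext i j; simp [vecMulVec_apply, mul_comm]

lemma vecMulVec_smul_left (c : ℝ) (u : Fin p → ℝ) (v : Fin q → ℝ) :
    vecMulVec (c • u) v = c • vecMulVec u v := by
  ext i j; simp [vecMulVec_apply, mul_assoc]

lemma vecMulVec_sub_left (u w : Fin p → ℝ) (v : Fin q → ℝ) :
    vecMulVec (u - w) v = vecMulVec u v - vecMulVec w v := by
  ext i j; simp [vecMulVec_apply, sub_mul]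

lemma vecMulVec_zero_left (v : Fin q → ℝ) : vecMulVec (0 : Fin p → ℝ) v = 0 := by
  ext i j; simp [vecMulVec_apply]

lemma vecMulVec_zero_right (u : Fin p → ℝ) : vecMulVec u (0 : Fin q → ℝ) = 0 := by
  ext i j; simp [vecMulVec_apply]

end Helpers


lemma mp_unique {m n : ℕ} (A : Matrix (Fin m) (Fin n) ℝ)
    (X Y : Matrix (Fin n) (Fin m) ℝ)
    (hX : IsMoorePenrose A X) (hY : IsMoorePenrose A Y) : X = Y := by
  obtain ⟨hX1, hX2, hX3, hX4⟩ := hX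
  obtain ⟨hY1, hY2, hY3, hY4⟩ := hY
  have hAX : A * X = A * Y := by
    calc A * X = (A * X)ᵀ := hX3.symm
      _ = ((A * Y * A) * X)ᵀ := by rw [hY1]
      _ = ((A * Y) * (A * X))ᵀ := by simp only [Matrix.mul_assoc]
      _ = (A * X)ᵀ * (A * Y)ᵀ := by rw [Matrix.transpose_mul]
      _ = (A * X) * (A * Y) := by rw [hX3, hY3]
      _ = (A * X * A) * Y := by simp only [Matrix.mul_assoc]
      _ = A * Y := by rw [hX1]
  have hXA : X * A = Y * A := by
    calc X * A = (X * A)ᵀ := hX4.symm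
      _ = (X * (A * Y * A))ᵀ := by rw [hY1]
      _ = ((X * A) * (Y * A))ᵀ := by simp only [Matrix.mul_assoc]
      _ = (Y * A)ᵀ * (X * A)ᵀ := by rw [Matrix.transpose_mul]
      _ = (Y * A) * (X * A) := by rw [hX4, hY4]
      _ = Y * (A * X * A) := by simp only [Matrix.mul_assoc]
      _ = Y * A := by rw [hX1]
  calc X = X * A * X := hX2.symm
    _ = X * (A * Y) := by simp only [Matrix.mul_assoc]; rw [hAX]
    _ = (X * A) * Y := by simp only [Matrix.mul_assoc]
    _ = (Y * A) * Y := by rw [hXA]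
    _ = Y := hY2

/-- Greville column-deletion identity: if `Ã = [A a]` and
`Ã⁺ = [B; b]`, then `A⁺ = B + d b` with `d = B(a − b⁺)` if `bA = 0` and
`d = (1 − ba)⁻¹ B a` if `bA ≠ 0`; moreover `bA ≠ 0 → ba < 1`.
Here `b⁺ = (b⬝b)⁻¹ • b` (so `0⁺ = 0`). -/
theorem stmt12 {n m : ℕ} (A : Matrix (Fin n) (Fin m) ℝ) (a : Fin n → ℝ)
    (Atil : Matrix (Fin n) (Fin (m + 1)) ℝ)
    (hAtil : Atil = Matrix.of fun i => Fin.snoc (A i) (a i))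
    (Atp : Matrix (Fin (m + 1)) (Fin n) ℝ) (hAtp : IsMoorePenrose Atil Atp)
    (Ap : Matrix (Fin m) (Fin n) ℝ) (hAp : IsMoorePenrose A Ap) : by
      classical
      exact
        let B : Matrix (Fin m) (Fin n) ℝ := Matrix.of fun i => Atp i.castSucc
        let b : Fin n → ℝ := Atp (Fin.last m)
        let bplus : Fin n → ℝ := (b ⬝ᵥ b)⁻¹ • b
        let d : Fin m → ℝ :=
          if b ᵥ* A = 0 then B.mulVec (a - bplus) else (1 - b ⬝ᵥ a)⁻¹ • B.mulVec a
        Ap = B + vecMulVec d b ∧ (b ᵥ* A ≠ 0 → b ⬝ᵥ a < 1) := by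

  classical
  obtain ⟨hc1, hc2, hc3, hc4⟩ := hAtp
  set B : Matrix (Fin m) (Fin n) ℝ := Matrix.of fun i => Atp i.castSucc with hBdef
  set b : Fin n → ℝ := Atp (Fin.last m) with hbdef
  have hP : Atil * Atp = A * B + vecMulVec a b := by
    ext i j
    simp only [Matrix.mul_apply, hAtil, Matrix.of_apply, Matrix.add_apply, vecMulVec_apply]
    rw [Fin.sum_univ_castSucc]
    simp [Fin.snoc_castSucc, Fin.snoc_last, hBdef, hbdef]
  set P : Matrix (Fin n) (Fin n) ℝ := A * B + vecMulVec a b with hPdef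
  -- block identities extracted from the four Penrose conditions for Atil
  have h1 : P * Atil = Atil := by rw [← hP]; exact hc1
  have hPA : P * A = A := by
    ext i j
    have := congrFun (congrFun h1 i) j.castSucc
    simpa [Matrix.mul_apply, hAtil, Fin.snoc_castSucc] using this
  have hPa : P *ᵥ a = a := by
    ext i
    have := congrFun (congrFun h1 i) (Fin.last m)
    simpa [Matrix.mul_apply, hAtil, Fin.snoc_last, Matrix.mulVec, dotProduct] using this
  have h2 : Atp * P = Atp := by rw [← hP, ← Matrix.mul_assoc]; exact hc2
  have hBP : B * P = B := by
    ext i j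
    have := congrFun (congrFun h2 i.castSucc) j
    simpa [Matrix.mul_apply, hBdef] using this
  have hbP : b ᵥ* P = b := by
    ext j
    have := congrFun (congrFun h2 (Fin.last m)) j
    simpa [Matrix.mul_apply, hbdef, Matrix.vecMul, dotProduct] using this
  have hPsym : Pᵀ = P := by rw [← hP]; exact hc3
  have hBAsym : (B * A)ᵀ = B * A := by
    ext i j
    have := congrFun (congrFun hc4 j.castSucc) i.castSucc
    simpa [Matrix.mul_apply, Matrix.transpose_apply, hAtil, hBdef, Fin.snoc_castSucc] using this.symm
  have hBa : B *ᵥ a = b ᵥ* A := by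
    ext i
    have := congrFun (congrFun hc4 (Fin.last m)) i.castSucc
    simpa [Matrix.mul_apply, Matrix.transpose_apply, hAtil, hBdef, hbdef, Fin.snoc_castSucc,
      Fin.snoc_last, Matrix.mulVec, Matrix.vecMul, dotProduct] using this
  set β : ℝ := b ⬝ᵥ a with hβdef
  have hABa : (A * B) *ᵥ a = a - β • a := by
    have h : (A * B) *ᵥ a + (vecMulVec a b) *ᵥ a = a := by
      rw [← add_mulVec, ← hPdef]; exact hPa
    rw [vecMulVec_mulVec] at h
    linear_combination (norm := module) h
  have hbAB : (b ᵥ* A) ᵥ* B = b - β • b := by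
    have h : b ᵥ* (A * B) + b ᵥ* vecMulVec a b = b := by
      rw [← vecMul_add, ← hPdef]; exact hbP
    rw [vecMul_vecMulVec, ← vecMul_vecMul] at h
    linear_combination (norm := module) h
  have hdot : (b ᵥ* A) ⬝ᵥ (b ᵥ* A) = β - β * β := by
    have h := congrArg (fun v => v ⬝ᵥ a) hbAB
    simp only [sub_dotProduct, smul_dotProduct, smul_eq_mul] at h
    rw [← dotProduct_mulVec, hBa] at h
    simpa [hβdef] using h
  have hlt : b ᵥ* A ≠ 0 → β < 1 := by
    intro h
    have hpos : 0 < (b ᵥ* A) ⬝ᵥ (b ᵥ* A) := by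
      rcases lt_or_eq_of_le (Finset.sum_nonneg fun i _ => mul_self_nonneg ((b ᵥ* A) i)) with
        hlt' | heq
      · exact hlt'
      · exact absurd (dotProduct_self_eq_zero.mp heq.symm) h
    nlinarith [hdot]
  refine ⟨?_, hlt⟩
  by_cases h : b ᵥ* A = 0
  · -- case bA = 0
    rw [if_pos h]
    have hBa0 : B *ᵥ a = 0 := by rw [hBa, h]
    refine mp_unique A Ap _ hAp ?_
    by_cases hb : b = 0
    · -- subcase b = 0 : the correction term vanishes and B itself works
      have hPAB : P = A * B := by rw [hPdef, hb, vecMulVec_zero_right, add_zero]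
      have hCB : B + vecMulVec (B *ᵥ (a - (b ⬝ᵥ b)⁻¹ • b)) b = B := by
        rw [hb, vecMulVec_zero_right, add_zero]
      rw [hCB]
      refine ⟨?_, ?_, ?_, hBAsym⟩
      · rw [← hPAB]; exact hPA
      · rw [Matrix.mul_assoc, ← hPAB]; exact hBP
      · rw [← hPAB]; exact hPsym
    · -- subcase b ≠ 0
      have hbb : (0:ℝ) < b ⬝ᵥ b := by
        rcases lt_or_eq_of_le (Finset.sum_nonneg fun i _ => mul_self_nonneg (b i)) with
          hlt' | heq
        · exact hlt'
        · exact absurd (dotProduct_self_eq_zero.mp heq.symm) hb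
      set s : ℝ := (b ⬝ᵥ b)⁻¹ with hsdef
      have hs : s * (b ⬝ᵥ b) = 1 := inv_mul_cancel₀ (ne_of_gt hbb)
      set d : Fin m → ℝ := B *ᵥ (a - s • b) with hddef
      have hd : d = -(s • (B *ᵥ b)) := by
        rw [hddef, mulVec_sub, hBa0, mulVec_smul, zero_sub]
      have hPb : P *ᵥ b = b := by
        rw [← hPsym, mulVec_transpose, hbP]
      have hABb : (A * B) *ᵥ b = b - (b ⬝ᵥ b) • a := by
        have h' : (A * B) *ᵥ b + (vecMulVec a b) *ᵥ b = b := by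
          rw [← add_mulVec, ← hPdef]; exact hPb
        rw [vecMulVec_mulVec] at h'
        linear_combination (norm := module) h'
      have hAd : A *ᵥ d = a - s • b := by
        rw [hd, mulVec_neg, mulVec_smul, mulVec_mulVec, hABb, smul_sub, smul_smul, hs]
        module
      have hAC : A * (B + vecMulVec d b) = P - s • vecMulVec b b := by
        rw [Matrix.mul_add, mul_vecMulVec, hAd, vecMulVec_sub_left, vecMulVec_smul_left, hPdef]
        abel
      have hBAB : B * A * B = B := by
        have h' : B * (A * B) + B * vecMulVec a b = B := by
          rw [← Matrix.mul_add, ← hPdef]; exact hBP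
        rw [mul_vecMulVec, hBa0, vecMulVec_zero_left] at h'
        rw [Matrix.mul_assoc]
        simpa using h'
      have hCA : (B + vecMulVec d b) * A = B * A := by
        rw [Matrix.add_mul, vecMulVec_mul, h, vecMulVec_zero_right, add_zero]
      refine ⟨?_, ?_, ?_, ?_⟩
      · rw [hAC, Matrix.sub_mul, hPA, Matrix.smul_mul, vecMulVec_mul, h,
          vecMulVec_zero_right, smul_zero, sub_zero]
      · have hBAd : (B * A) *ᵥ d = d := by
          rw [hd, mulVec_neg, mulVec_smul, mulVec_mulVec, hBAB]
        calc (B + vecMulVec d b) * A * (B + vecMulVec d b)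
            = (B * A) * (B + vecMulVec d b) := by rw [hCA]
          _ = B * A * B + vecMulVec ((B * A) *ᵥ d) b := by rw [Matrix.mul_add, mul_vecMulVec]
          _ = B + vecMulVec d b := by rw [hBAB, hBAd]
      · rw [hAC, Matrix.transpose_sub, hPsym, Matrix.transpose_smul, transpose_vecMulVec]
      · rw [hCA, hBAsym, ← hCA]
  · -- case bA ≠ 0
    rw [if_neg h]
    have hβlt := hlt h
    have hone : (1 : ℝ) - β ≠ 0 := by
      intro h'
      linarith
    set γ : ℝ := (1 - β)⁻¹ with hγdef
    set d : Fin m → ℝ := γ • (B *ᵥ a) with hddef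
    refine mp_unique A Ap _ hAp ?_
    have hAd : A *ᵥ d = a := by
      rw [hddef, mulVec_smul, mulVec_mulVec, hABa]
      have : a - β • a = (1 - β) • a := by module
      rw [this, smul_smul, hγdef, inv_mul_cancel₀ hone, one_smul]
    have hAC : A * (B + vecMulVec d b) = P := by
      rw [Matrix.mul_add, mul_vecMulVec, hAd, hPdef]
    have hCA : (B + vecMulVec d b) * A = B * A + γ • vecMulVec (b ᵥ* A) (b ᵥ* A) := by
      rw [Matrix.add_mul, vecMulVec_mul, hddef, hBa, vecMulVec_smul_left]
    refine ⟨?_, ?_, ?_, ?_⟩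
    · rw [hAC, hPA]
    · rw [Matrix.mul_assoc, hAC, Matrix.add_mul, hBP, vecMulVec_mul, hbP]
    · rw [hAC, hPsym]
    · rw [hCA, Matrix.transpose_add, Matrix.transpose_smul, transpose_vecMulVec, hBAsym]
end

section
/- For f := τ̂_DiM − τ on Ω, the expected carré du champ under the uniform distribution equals E_π[Γ(f)] = (n/(n−1)) · ( Var₁/n₁² + Var₀/n₀² + 2 Cov_diff/(n₁ n₀) ), where Var_α := (1/n) Σ_{i=1}^n (y_i^{(α)} − ȳ^{(α)})² for α ∈ {0,1} and Cov_diff := (1/n) Σ_{i=1}^n (y_i^{(1)} − ȳ^{(1)})(y_i^{(0)} − ȳ^{(0)}), with ȳ^{(α)} := (1/n) Σ_i y_i^{(α)}. -/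
open Finset

noncomputable section

/-- `Ω`: the collection of `m`-element subsets of `{1,…,n}`, as a `Finset`. -/
def ΩsetJ (n m : ℕ) : Finset (Finset (Fin n)) := Finset.powersetCard m Finset.univ

/-- Expectation with respect to the uniform distribution `π` on `Ω`. -/
def EpiJ (n m : ℕ) (g : Finset (Fin n) → ℝ) : ℝ :=
  ((ΩsetJ n m).card : ℝ)⁻¹ * ∑ S ∈ ΩsetJ n m, g S

/-- The one-swap (Johnson) kernel: `P(S,S') = 1/(m(n−m))` if `|S ∩ S'| = m−1`, else `0`. -/
def johnsonP (n m : ℕ) (S S' : Finset (Fin n)) : ℝ :=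
  if (S ∩ S').card = m - 1 then ((m * (n - m) : ℕ) : ℝ)⁻¹ else 0

/-- Carré du champ `Γ(f)(S) = (1/2) Σ_{S'} P(S,S') (f(S') − f(S))²`. -/
def gammaJ (n m : ℕ) (f : Finset (Fin n) → ℝ) (S : Finset (Fin n)) : ℝ :=
  (1 / 2) * ∑ S' ∈ ΩsetJ n m, johnsonP n m S S' * (f S' - f S) ^ 2

/-- Variance with respect to the uniform distribution `π` on `Ω`. -/
def VarJ (n m : ℕ) (f : Finset (Fin n) → ℝ) : ℝ :=
  EpiJ n m fun S => (f S - EpiJ n m f) ^ 2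

/-- Generator `(Lf)(S) = Σ_{S'} P(S,S') f(S') − f(S)`. -/
def LopJ (n m : ℕ) (f : Finset (Fin n) → ℝ) (S : Finset (Fin n)) : ℝ :=
  (∑ S' ∈ ΩsetJ n m, johnsonP n m S S' * f S') - f S

end

/-- The difference-in-means estimator. -/
noncomputable def tauDiM {n : ℕ} (n₁ n₀ : ℕ) (y1 y0 : Fin n → ℝ)
    (S : Finset (Fin n)) : ℝ :=
  (n₁ : ℝ)⁻¹ * ∑ i ∈ S, y1 i - (n₀ : ℝ)⁻¹ * ∑ j ∈ Sᶜ, y0 j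

/-- Finite-population mean. -/
noncomputable def fpMean {n : ℕ} (a : Fin n → ℝ) : ℝ := (n : ℝ)⁻¹ * ∑ i, a i

/-- Finite-population variance. -/
noncomputable def fpVar {n : ℕ} (a : Fin n → ℝ) : ℝ :=
  (n : ℝ)⁻¹ * ∑ i, (a i - fpMean a) ^ 2

/-- Finite-population covariance. -/
noncomputable def fpCov {n : ℕ} (a b : Fin n → ℝ) : ℝ :=
  (n : ℝ)⁻¹ * ∑ i, (a i - fpMean a) * (b i - fpMean b)

/-
Writing `Z = y⁽¹⁾/n₁ + y⁽⁰⁾/n₀`, the estimator is `τ̂_DiM(S) = Σ_{i∈S} Z i − const`, so exchanging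
`i ∈ S` for `j ∉ S` changes `τ̂_DiM − τ` by `Z j − Z i`. These `n₁ n₀` exchanges are exactly the
one-swap neighbours of `S`. Averaging `Γ` over `S`, each ordered pair `(i, j)` with `i ≠ j` is counted
by the `C(n−2, n₁−1)` sets with `i ∈ S`, `j ∉ S`, and `C(n, n₁) n₁ n₀ = n (n−1) C(n−2, n₁−1)` turns
this into `E_π Γ = (2n(n−1))⁻¹ Σ_{i,j} (Z j − Z i)² = n/(n−1) · Var Z`; expanding `Var Z` gives the
claim.
-/

section Exchange

variable {α : Type*} [DecidableEq α]

def exchange (S : Finset α) (i j : α) : Finset α := insert j (S.erase i)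

lemma card_exchange {S : Finset α} {i j : α} (hi : i ∈ S) (hj : j ∉ S) :
    #(exchange S i j) = #S := by
  rw [exchange, card_insert_of_notMem (fun h => hj (mem_of_mem_erase h)),
    card_erase_add_one hi]

lemma inter_exchange {S : Finset α} (i : α) {j : α} (hj : j ∉ S) :
    S ∩ exchange S i j = S.erase i := by
  ext k
  simp only [exchange, mem_inter, mem_insert, mem_erase]
  grind

lemma sum_exchange_sub_sum {M : Type*} [AddCommGroup M] (a : α → M) {S : Finset α} {i j : α}
    (hi : i ∈ S) (hj : j ∉ S) :
    ∑ k ∈ exchange S i j, a k - ∑ k ∈ S, a k = a j - a i := by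
  rw [exchange, sum_insert (fun h => hj (mem_of_mem_erase h)), ← sum_erase_add _ _ hi]
  abel

lemma exists_exchange_of_card_inter {S S' : Finset α} (hS' : #S' = #S)
    (h : #(S ∩ S') + 1 = #S) : ∃ i ∈ S, ∃ j ∉ S, S' = exchange S i j := by
  obtain ⟨i, hiT, hi⟩ := exists_eq_insert_iff.mpr ⟨inter_subset_left, h⟩
  obtain ⟨j, hjT, hj⟩ := exists_eq_insert_iff.mpr ⟨inter_subset_right, hS' ▸ h⟩
  have hjS : j ∉ S := fun hjS => hjT (mem_inter.mpr ⟨hjS, hj ▸ mem_insert_self j _⟩)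
  refine ⟨i, hi ▸ mem_insert_self i _, j, hjS, ?_⟩
  have hSi := erase_insert hiT
  rw [hi] at hSi
  rw [exchange, hSi, hj]

lemma exchange_injOn [Fintype α] (S : Finset α) :
    Set.InjOn (fun p : α × α => exchange S p.1 p.2) (S ×ˢ Sᶜ : Finset (α × α)) := by
  rintro ⟨i, j⟩ hij ⟨i', j'⟩ hij' h
  simp only [coe_product, coe_compl, Set.mem_prod, mem_coe, Set.mem_compl_iff] at hij hij'
  simp only [exchange, Finset.ext_iff, mem_insert, mem_erase] at h
  grind

end Exchange

section Johnson

variable {n m : ℕ}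

lemma mem_ΩsetJ {S : Finset (Fin n)} : S ∈ ΩsetJ n m ↔ #S = m := by
  simp [ΩsetJ]

lemma filter_ΩsetJ_card_inter_eq_image_exchange (hm : 1 ≤ m) {S : Finset (Fin n)}
    (hS : #S = m) :
    {S' ∈ ΩsetJ n m | #(S ∩ S') = m - 1} = (S ×ˢ Sᶜ).image fun p => exchange S p.1 p.2 := by
  ext S'
  simp only [mem_filter, mem_image, mem_product, mem_compl, mem_ΩsetJ, Prod.exists]
  constructor
  · rintro ⟨hS', hinter⟩
    obtain ⟨i, hi, j, hj, rfl⟩ := exists_exchange_of_card_inter (hS'.trans hS.symm) (by omega)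
    exact ⟨i, j, ⟨hi, hj⟩, rfl⟩
  · rintro ⟨i, j, ⟨hi, hj⟩, rfl⟩
    rw [card_exchange hi hj, inter_exchange i hj, card_erase_of_mem hi, hS]
    exact ⟨rfl, rfl⟩

lemma gammaJ_eq_sum_exchange (hm : 1 ≤ m) (f : Finset (Fin n) → ℝ) {S : Finset (Fin n)}
    (hS : #S = m) :
    gammaJ n m f S = 1 / 2 * ((m * (n - m) : ℕ) : ℝ)⁻¹ *
      ∑ p ∈ S ×ˢ Sᶜ, (f (exchange S p.1 p.2) - f S) ^ 2 := by
  simp only [gammaJ, johnsonP, ite_mul, zero_mul]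
  rw [← sum_filter, filter_ΩsetJ_card_inter_eq_image_exchange hm hS,
    sum_image (exchange_injOn S), ← mul_sum, mul_assoc]

lemma card_filter_ΩsetJ_mem_notMem (hm : 1 ≤ m) {i j : Fin n} (hij : i ≠ j) :
    #{S ∈ ΩsetJ n m | i ∈ S ∧ j ∉ S} = (n - 2).choose (m - 1) := by
  have : {S ∈ ΩsetJ n m | i ∈ S ∧ j ∉ S} = {S ∈ (univ.erase j).powersetCard m | {i} ⊆ S} := by
    ext S
    simp only [ΩsetJ, mem_filter, mem_powersetCard, subset_univ, true_and, singleton_subset_iff,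
      subset_erase]
    tauto
  rw [this, card_filter_powersetCard_subset _ _ _ (by simpa using hij) (by simpa using hm)]
  simp only [card_erase_of_mem (mem_univ j), card_univ, Fintype.card_fin, card_singleton]
  rfl

lemma sum_ΩsetJ_sum_product_compl (hm : 1 ≤ m) (g : Fin n → Fin n → ℝ)
    (hg : ∀ i, g i i = 0) :
    ∑ S ∈ ΩsetJ n m, ∑ p ∈ S ×ˢ Sᶜ, g p.1 p.2 = (n - 2).choose (m - 1) * ∑ i, ∑ j, g i j := by
  have hswap : ∑ S ∈ ΩsetJ n m, ∑ p ∈ S ×ˢ Sᶜ, g p.1 p.2 =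
      ∑ p : Fin n × Fin n, ∑ S ∈ ΩsetJ n m with p.1 ∈ S ∧ p.2 ∉ S, g p.1 p.2 :=
    sum_comm' fun S p => by simp
  rw [hswap, ← univ_product_univ, sum_product, mul_sum]
  refine sum_congr rfl fun i _ => ?_
  rw [mul_sum]
  refine sum_congr rfl fun j _ => ?_
  obtain rfl | hij := eq_or_ne i j
  · simp [hg]
  · rw [sum_const, card_filter_ΩsetJ_mem_notMem hm hij, nsmul_eq_mul]

end Johnson

lemma Nat.choose_succ_succ_mul_mul_sub (n k : ℕ) :
    (n + 2).choose (k + 1) * (k + 1) * (n + 1 - k) = (n + 2) * (n + 1) * n.choose k := by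
  rw [← Nat.add_one_mul_choose_eq, mul_assoc, ← Nat.choose_mul_succ_eq]
  ring

section FinitePopulation

variable {n : ℕ}

lemma fpMean_add (a b : Fin n → ℝ) (c d : ℝ) :
    fpMean (fun i => c * a i + d * b i) = c * fpMean a + d * fpMean b := by
  simp only [fpMean, sum_add_distrib, ← mul_sum]
  ring

lemma fpVar_add (a b : Fin n → ℝ) (c d : ℝ) :
    fpVar (fun i => c * a i + d * b i) =
      c ^ 2 * fpVar a + d ^ 2 * fpVar b + 2 * c * d * fpCov a b := by
  have hsq : ∀ i, (c * a i + d * b i - fpMean fun i => c * a i + d * b i) ^ 2 =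
      c ^ 2 * (a i - fpMean a) ^ 2 + d ^ 2 * (b i - fpMean b) ^ 2 +
        2 * c * d * ((a i - fpMean a) * (b i - fpMean b)) := by
    intro i
    rw [fpMean_add]
    ring
  simp only [fpVar, fpCov, hsq, sum_add_distrib, ← mul_sum]
  ring

lemma sum_sum_sub_sq_eq_fpVar (a : Fin n → ℝ) :
    ∑ i, ∑ j, (a j - a i) ^ 2 = 2 * n ^ 2 * fpVar a := by
  obtain rfl | hn := n.eq_zero_or_pos
  · simp
  set b := fun i => a i - fpMean a
  have hb : ∑ i, b i = 0 := by
    simp only [b, fpMean, sum_sub_distrib, sum_const, card_univ, Fintype.card_fin, nsmul_eq_mul]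
    field_simp
    ring
  have hexpand : ∀ i j, (a j - a i) ^ 2 = b j ^ 2 + b i ^ 2 - 2 * b i * b j := fun i j => by
    simp only [b]
    ring
  have hvar : fpVar a = (n : ℝ)⁻¹ * ∑ i, b i ^ 2 := rfl
  simp only [hexpand, sum_add_distrib, sum_sub_distrib, ← mul_sum, hb, mul_zero, sum_const_zero,
    sum_const, card_univ, Fintype.card_fin, nsmul_eq_mul, hvar]
  field_simp
  ring

end FinitePopulation

theorem EpiJ_gammaJ_sum_add_const {n m : ℕ} (hm : 1 ≤ m) (hmn : m < n) (a : Fin n → ℝ)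
    (c : ℝ) :
    EpiJ n m (gammaJ n m fun S => ∑ i ∈ S, a i + c) = n / (n - 1) * fpVar a := by
  have hgamma : ∀ S ∈ ΩsetJ n m, gammaJ n m (fun S => ∑ i ∈ S, a i + c) S =
      1 / 2 * ((m * (n - m) : ℕ) : ℝ)⁻¹ * ∑ p ∈ S ×ˢ Sᶜ, (a p.2 - a p.1) ^ 2 := by
    intro S hS
    rw [gammaJ_eq_sum_exchange hm _ (mem_ΩsetJ.mp hS)]
    refine congrArg _ (sum_congr rfl fun p hp => ?_)
    rw [mem_product, mem_compl] at hp
    rw [add_sub_add_right_eq_sub, sum_exchange_sub_sum a hp.1 hp.2]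
  have hcard : #(ΩsetJ n m) = n.choose m := by simp [ΩsetJ]
  rw [EpiJ, sum_congr rfl hgamma, ← mul_sum,
    sum_ΩsetJ_sum_product_compl hm (fun i j => (a j - a i) ^ 2) (by simp),
    sum_sum_sub_sq_eq_fpVar, hcard]
  obtain ⟨k, rfl⟩ : ∃ k, m = k + 1 := ⟨m - 1, by omega⟩
  obtain ⟨N, rfl⟩ : ∃ N, n = N + 2 := ⟨n - 2, by omega⟩
  have hchoose := congrArg (Nat.cast : ℕ → ℝ) (Nat.choose_succ_succ_mul_mul_sub N k)
  rw [show N + 2 - (k + 1) = N + 1 - k by omega, show N + 2 - 2 = N by omega, Nat.add_sub_cancel]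
  push_cast [Nat.cast_sub (by omega : k ≤ N + 1)] at hchoose ⊢
  have hpos : (0 : ℝ) < N + 1 - k := by
    rw [sub_pos]
    exact_mod_cast (by omega : k < N + 1)
  have hC : ((N + 2).choose (k + 1) : ℝ) ≠ 0 := by
    exact_mod_cast (Nat.choose_pos (by omega)).ne'
  rw [show (N : ℝ) + 2 - 1 = N + 1 by ring]
  field_simp
  linear_combination (-fpVar a) * hchoose

lemma tauDiM_eq_sum_add_const {n : ℕ} (n₁ n₀ : ℕ) (y1 y0 : Fin n → ℝ) (S : Finset (Fin n)) :
    tauDiM n₁ n₀ y1 y0 S =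
      ∑ i ∈ S, ((n₁ : ℝ)⁻¹ * y1 i + (n₀ : ℝ)⁻¹ * y0 i) - (n₀ : ℝ)⁻¹ * ∑ j, y0 j := by
  rw [tauDiM, ← sum_compl_add_sum S, sum_add_distrib, ← mul_sum, ← mul_sum]
  ring

theorem stmt17_general {n n₁ : ℕ} (h1 : 1 ≤ n₁) (h2 : n₁ ≤ n - 1)
    (y1 y0 : Fin n → ℝ) :
    EpiJ n n₁ (gammaJ n n₁ fun S =>
        tauDiM n₁ (n - n₁) y1 y0 S - (n : ℝ)⁻¹ * ∑ i, (y1 i - y0 i))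
      = (n : ℝ) / ((n : ℝ) - 1) *
          (fpVar y1 / (n₁ : ℝ) ^ 2 + fpVar y0 / ((n - n₁ : ℕ) : ℝ) ^ 2 +
            2 * fpCov y1 y0 / ((n₁ : ℝ) * ((n - n₁ : ℕ) : ℝ))) := by
  have hf : (fun S => tauDiM n₁ (n - n₁) y1 y0 S - (n : ℝ)⁻¹ * ∑ i, (y1 i - y0 i)) =
      fun S => ∑ i ∈ S, ((n₁ : ℝ)⁻¹ * y1 i + ((n - n₁ : ℕ) : ℝ)⁻¹ * y0 i) +
        (-(((n - n₁ : ℕ) : ℝ)⁻¹ * ∑ j, y0 j) - (n : ℝ)⁻¹ * ∑ i, (y1 i - y0 i)) := by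
    funext S
    rw [tauDiM_eq_sum_add_const]
    ring
  rw [hf, EpiJ_gammaJ_sum_add_const h1 (by omega), fpVar_add]
  ring

/-- expected carré du champ for `f = τ̂_DiM − τ` under complete randomization:
`E_π[Γ(f)] = (n/(n−1)) (Var₁/n₁² + Var₀/n₀² + 2 Cov_diff/(n₁ n₀))`. -/
theorem stmt17 {n n₁ : ℕ} (hn : 2 ≤ n) (h1 : 1 ≤ n₁) (h2 : n₁ ≤ n - 1)
    (y1 y0 : Fin n → ℝ) :
    EpiJ n n₁ (gammaJ n n₁ fun S =>
        tauDiM n₁ (n - n₁) y1 y0 S - (n : ℝ)⁻¹ * ∑ i, (y1 i - y0 i))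
      = (n : ℝ) / ((n : ℝ) - 1) *
          (fpVar y1 / (n₁ : ℝ) ^ 2 + fpVar y0 / ((n - n₁ : ℕ) : ℝ) ^ 2 +
            2 * fpCov y1 y0 / ((n₁ : ℝ) * ((n - n₁ : ℕ) : ℝ))) :=
  stmt17_general h1 h2 y1 y0
end
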